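/- arXiv:2411.04488 — 4 statements merged into one kernel-verified Lean document; each statement's English description precedes it below -/
import Mathlib

section
/- Let K ⊂ ℝ³ be a convex body with boundary of class C³, and let γ : (a,b) → int(K) be a unit-speed C¹ centroid curve of K such that the cut-off volume δ(s) = vol({x ∈ K : ⟨x − γ(s), γ'(s)⟩ ≤ 0}) tends to 0 as s → a⁺. If the limit q₀ = lim_{s→a⁺} γ(s) exists, then q₀ ∈ ∂K, the limit n₀ = lim_{s→a⁺} γ'(s) exists, and n₀ is the inner unit normal of ∂K at q₀, i.e., K ⊆ {x ∈ ℝ³ : ⟨x − q₀, n₀⟩ ≥ 0}; in other words, the centroid curve approaches ∂K perpendicularly. -/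
open MeasureTheory Set Filter
open scoped RealInnerProductSpace Topology

noncomputable section

noncomputable section

abbrev E3 := EuclideanSpace ℝ (Fin 3)

lemma aux_half_ball (c d : E3) (ρ : ℝ) (hd : ‖d‖ = 1) :
    Metric.ball (c - ρ • d) ρ ⊆ {x : E3 | ⟪x - c, d⟫ ≤ 0} := by
  intro x hx
  simp only [Metric.mem_ball, dist_eq_norm] at hx
  have hdd : ⟪d, d⟫ = 1 := by
    rw [real_inner_self_eq_norm_sq, hd]; norm_num
  have h1 : ⟪x - c, d⟫ = ⟪x - (c - ρ • d), d⟫ - ρ := by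
    have : x - c = (x - (c - ρ • d)) - ρ • d := by abel
    rw [this, inner_sub_left, real_inner_smul_left, hdd, mul_one]
  have h2 : ⟪x - (c - ρ • d), d⟫ ≤ ‖x - (c - ρ • d)‖ := by
    calc ⟪x - (c - ρ • d), d⟫ ≤ ‖x - (c - ρ • d)‖ * ‖d‖ := real_inner_le_norm _ _
    _ = ‖x - (c - ρ • d)‖ := by rw [hd, mul_one]
  simp only [mem_setOf_eq, h1]
  linarith

lemma aux_unique_normal (f : E3 → ℝ) (q₀ : E3) (hdiff : DifferentiableAt ℝ f q₀)
    (hq : f q₀ = 0) (K : Set E3) (hKf : K = {x : E3 | f x ≤ 0})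
    (hL : fderiv ℝ f q₀ ≠ 0) (n : E3) (hn1 : ‖n‖ = 1)
    (hsupp : ∀ x ∈ K, 0 ≤ ⟪x - q₀, n⟫) :
    n = -(‖(InnerProductSpace.toDual ℝ E3).symm (fderiv ℝ f q₀)‖⁻¹) •
        (InnerProductSpace.toDual ℝ E3).symm (fderiv ℝ f q₀) := by
  set L := fderiv ℝ f q₀ with hLdef
  set g : E3 := (InnerProductSpace.toDual ℝ E3).symm L with hgdef
  have hgv : ∀ v : E3, ⟪g, v⟫ = L v := fun v => InnerProductSpace.toDual_symm_apply
  have hg0 : g ≠ 0 := by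
    intro h
    apply hL
    have := (InnerProductSpace.toDual ℝ E3).symm.map_eq_zero_iff.mp h
    exact this
  have hgnorm : (0:ℝ) < ‖g‖ := norm_pos_iff.mpr hg0
  have hLg : L g = ‖g‖ ^ 2 := by
    rw [← hgv, real_inner_self_eq_norm_sq]
  clear hgdef
  clear_value g
  -- Claim 1: strict descent directions have nonneg inner product with n
  have claim1 : ∀ v : E3, L v < 0 → 0 ≤ ⟪v, n⟫ := by
    intro v hv
    have hF : HasFDerivAt f L q₀ := hdiff.hasFDerivAt
    have hline : HasDerivAt (fun t : ℝ => q₀ + t • v) v 0 := by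
      have h1 : HasDerivAt (fun t : ℝ => t • v) ((1:ℝ) • v) 0 := (hasDerivAt_id 0).smul_const v
      simpa using h1.const_add q₀
    have hcomp : HasDerivAt (fun t : ℝ => f (q₀ + t • v)) (L v) 0 := by
      have hF' : HasFDerivAt f L (q₀ + (0:ℝ) • v) := by simpa using hF
      exact hF'.comp_hasDerivAt (x := 0) hline
    have hslope := hasDerivAt_iff_tendsto_slope.mp hcomp
    have hneg : ∀ᶠ t in 𝓝[≠] (0:ℝ), slope (fun t : ℝ => f (q₀ + t • v)) 0 t < 0 :=
      hslope.eventually_lt_const hv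
    have hneg' : ∀ᶠ t in 𝓝[>] (0:ℝ), slope (fun t : ℝ => f (q₀ + t • v)) 0 t < 0 :=
      hneg.filter_mono (nhdsWithin_mono 0 (fun t ht => ne_of_gt ht))
    obtain ⟨t, hts, ht0⟩ := (hneg'.and (eventually_mem_nhdsWithin)).exists
    have ht0' : (0:ℝ) < t := ht0
    have hft : f (q₀ + t • v) < 0 := by
      have : slope (fun t : ℝ => f (q₀ + t • v)) 0 t = f (q₀ + t • v) / t := by
        simp [slope, hq, div_eq_inv_mul]
      rw [this] at hts
      by_contra h
      push_neg at h
      have := div_nonneg h ht0'.le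
      linarith
    have hmem : q₀ + t • v ∈ K := by rw [hKf]; exact le_of_lt hft
    have := hsupp _ hmem
    have heq : ⟪q₀ + t • v - q₀, n⟫ = t * ⟪v, n⟫ := by
      rw [show q₀ + t • v - q₀ = t • v by abel, real_inner_smul_left]
    rw [heq] at this
    exact nonneg_of_mul_nonneg_right this ht0'
  -- Claim 2: weak descent directions too
  have claim2 : ∀ v : E3, L v ≤ 0 → 0 ≤ ⟪v, n⟫ := by
    intro v hv
    have key : ∀ ε : ℝ, 0 < ε → ε * ⟪g, n⟫ ≤ ⟪v, n⟫ := by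
      intro ε hε
      have hLvε : L (v - ε • g) < 0 := by
        rw [map_sub, L.map_smul, hLg]
        have : 0 < ε * ‖g‖ ^ 2 := by positivity
        simp only [smul_eq_mul]
        linarith
      have := claim1 _ hLvε
      rw [inner_sub_left, real_inner_smul_left] at this
      linarith
    have hlim : Tendsto (fun ε : ℝ => ε * ⟪g, n⟫) (𝓝[>] 0) (𝓝 0) := by
      have : Tendsto (fun ε : ℝ => ε * ⟪g, n⟫) (𝓝 0) (𝓝 (0 * ⟪g, n⟫)) :=
        (tendsto_id.mul_const _)
      simpa using this.mono_left nhdsWithin_le_nhds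
    refine le_of_tendsto hlim ?_
    filter_upwards [self_mem_nhdsWithin] with ε hε
    exact key ε hε
  -- orthogonal directions: inner product zero
  have claim3 : ∀ v : E3, L v = 0 → ⟪v, n⟫ = 0 := by
    intro v hv
    have h1 := claim2 v (le_of_eq hv)
    have h2 := claim2 (-v) (by rw [map_neg, hv, neg_zero])
    rw [inner_neg_left] at h2
    linarith
  have hgn_le : ⟪g, n⟫ ≤ 0 := by
    have := claim1 (-g) (by rw [map_neg, hLg]; nlinarith [hgnorm])
    rw [inner_neg_left] at this
    linarith
  -- decompose n
  set c : ℝ := ⟪g, n⟫ / ‖g‖ ^ 2 with hc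
  set w : E3 := n - c • g with hw
  have hLw : L w = 0 := by
    rw [← hgv]
    rw [hw, inner_sub_right, real_inner_smul_right, real_inner_self_eq_norm_sq, hc]
    field_simp
    ring
  have hwn : ⟪w, n⟫ = 0 := claim3 w hLw
  have hgw : ⟪g, w⟫ = 0 := by
    rw [hgv]; exact hLw
  have hwg : ⟪w, g⟫ = 0 := by rw [real_inner_comm]; exact hgw
  have hw0 : w = 0 := by
    have : ⟪w, w⟫ = 0 := by
      have : ⟪w, n - c • g⟫ = 0 := by
        rw [inner_sub_right, real_inner_smul_right, hwn, hwg]; ring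
      rwa [← hw] at this
    exact inner_self_eq_zero.mp this
  have hng : n = c • g := by
    have h : n - c • g = 0 := hw0
    have := sub_eq_zero.mp h
    exact this
  have hgn_sq : 1 = c * ⟪g, n⟫ := by
    have h1 : ⟪n, n⟫ = (1:ℝ) := by
      rw [real_inner_self_eq_norm_sq, hn1]; norm_num
    calc (1:ℝ) = ⟪n, n⟫ := h1.symm
    _ = ⟪c • g + w, n⟫ := by rw [hw]; congr 1; abel
    _ = c * ⟪g, n⟫ + ⟪w, n⟫ := by rw [inner_add_left, real_inner_smul_left]
    _ = c * ⟪g, n⟫ := by rw [hwn]; ring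
  -- from 1 = ⟪g,n⟫²/‖g‖² and ⟪g,n⟫ ≤ 0 conclude ⟪g,n⟫ = -‖g‖
  have hgn_eq : ⟪g, n⟫ = -‖g‖ := by
    have hne : (‖g‖:ℝ) ^ 2 ≠ 0 := by positivity
    have hct : c * ‖g‖ ^ 2 = ⟪g, n⟫ := by rw [hc]; field_simp
    have hsq : ⟪g, n⟫ ^ 2 = ‖g‖ ^ 2 := by
      calc ⟪g, n⟫ ^ 2 = (c * ‖g‖ ^ 2) * ⟪g, n⟫ := by rw [hct]; ring
      _ = ‖g‖ ^ 2 * (c * ⟪g, n⟫) := by ring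
      _ = ‖g‖ ^ 2 := by rw [← hgn_sq]; ring
    have hfac : (⟪g, n⟫ + ‖g‖) * (⟪g, n⟫ - ‖g‖) = 0 := by linear_combination hsq
    rcases mul_eq_zero.mp hfac with h | h
    · linarith
    · linarith [hgnorm, hgn_le]
  have hcval : c = -(‖g‖⁻¹) := by
    rw [hc, hgn_eq]
    field_simp
  rw [hng, hcval]

/-- A unit-speed C¹ centroid curve of a convex body `K` with C³ boundary
whose cut-off volume tends to `0` as `s → a⁺` approaches the boundary perpendicularly:
if `q₀ = lim_{s→a⁺} γ(s)` exists, then `q₀ ∈ ∂K`, `n₀ = lim_{s→a⁺} γ'(s)` exists,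
and `n₀` is the inner unit normal of `∂K` at `q₀`. -/
theorem centroid_curve_meets_boundary_perpendicularly
    (K : Set E3) (hKconv : Convex ℝ K) (hKcomp : IsCompact K)
    (hKint : (interior K).Nonempty)
    -- `∂K` is a C³ surface:
    (f : E3 → ℝ) (hf : ContDiff ℝ 3 f)
    (hKf : K = {x : E3 | f x ≤ 0})
    (hfbd : frontier K = {x : E3 | f x = 0})
    (hfgrad : ∀ x ∈ frontier K, fderiv ℝ f x ≠ 0)
    (a b : ℝ) (hab : a < b)
    (γ : ℝ → E3)
    (hγ : ContDiffOn ℝ 1 γ (Ioo a b))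
    (hγunit : ∀ s ∈ Ioo a b, ‖deriv γ s‖ = 1)
    (hγmem : ∀ s ∈ Ioo a b, γ s ∈ interior K)
    -- `γ` is a centroid curve of `K`:
    (hcent : ∀ s ∈ Ioo a b,
      0 < (μH[2] (K ∩ {x : E3 | ⟪x - γ s, deriv γ s⟫ = 0})).toReal ∧
      ((μH[2] (K ∩ {x : E3 | ⟪x - γ s, deriv γ s⟫ = 0})).toReal)⁻¹ •
        (∫ x in K ∩ {x : E3 | ⟪x - γ s, deriv γ s⟫ = 0}, x ∂μH[2]) = γ s)
    -- the cut-off volume tends to `0` as `s → a⁺`: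
    (hδ0 : Tendsto (fun s => (volume {x ∈ K | ⟪x - γ s, deriv γ s⟫ ≤ 0}).toReal)
      (𝓝[>] a) (𝓝 0))
    (q₀ : E3) (hq₀ : Tendsto γ (𝓝[>] a) (𝓝 q₀)) :
    q₀ ∈ frontier K ∧
      ∃ n₀ : E3, Tendsto (deriv γ) (𝓝[>] a) (𝓝 n₀) ∧ ‖n₀‖ = 1 ∧
        ∀ x ∈ K, 0 ≤ ⟪x - q₀, n₀⟫ := by
  have hIoo : Ioo a b ∈ 𝓝[>] a := Ioo_mem_nhdsGT hab
  have hKcl : IsClosed K := hKcomp.isClosed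
  have hq₀K : q₀ ∈ K := by
    refine hKcl.mem_of_tendsto hq₀ ?_
    filter_upwards [hIoo] with s hs
    exact interior_subset (hγmem s hs)
  have hKvol : volume K ≠ ⊤ := hKcomp.measure_lt_top.ne
  -- lower bound on cut-off volume from a ball inside the cut-off region
  have hδ_lb : ∀ (s : ℝ) (c : E3) (ρ : ℝ),
      Metric.ball c ρ ⊆ {x ∈ K | ⟪x - γ s, deriv γ s⟫ ≤ 0} →
      (volume (Metric.ball (0:E3) ρ)).toReal ≤
        (volume {x ∈ K | ⟪x - γ s, deriv γ s⟫ ≤ 0}).toReal := by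
    intro s c ρ hsub
    have h1 : volume (Metric.ball c ρ) ≤ volume {x ∈ K | ⟪x - γ s, deriv γ s⟫ ≤ 0} :=
      measure_mono hsub
    have h2 : volume {x ∈ K | ⟪x - γ s, deriv γ s⟫ ≤ 0} ≤ volume K :=
      measure_mono (fun x hx => hx.1)
    rw [← Measure.addHaar_ball_center volume c ρ]
    exact ENNReal.toReal_mono (lt_of_le_of_lt h2 hKvol.lt_top).ne h1
  -- Step A : q₀ ∈ frontier K
  have hq₀fr : q₀ ∈ frontier K := by
    rw [hKcl.frontier_eq]
    refine ⟨hq₀K, fun hin => ?_⟩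
    obtain ⟨r, hr0, hball⟩ := Metric.isOpen_iff.mp isOpen_interior q₀ hin
    have hv : 0 < (volume (Metric.ball (0:E3) (r/4))).toReal :=
      ENNReal.toReal_pos (Metric.measure_ball_pos _ _ (by positivity)).ne' measure_ball_lt_top.ne
    have hev1 : ∀ᶠ s in 𝓝[>] a, γ s ∈ Metric.ball q₀ (r/4) :=
      hq₀.eventually_mem (Metric.ball_mem_nhds q₀ (by positivity))
    have hev2 : ∀ᶠ s in 𝓝[>] a,
        (volume {x ∈ K | ⟪x - γ s, deriv γ s⟫ ≤ 0}).toReal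
          < (volume (Metric.ball (0:E3) (r/4))).toReal :=
      hδ0.eventually_lt_const hv
    obtain ⟨s, hsIoo, hs1, hs2⟩ := ((eventually_mem_set.2 hIoo).and (hev1.and hev2)).exists
    have hd : ‖deriv γ s‖ = 1 := hγunit s hsIoo
    set d := deriv γ s with hddef
    have hsub : Metric.ball (γ s - (r/4) • d) (r/4) ⊆ {x ∈ K | ⟪x - γ s, d⟫ ≤ 0} := by
      intro x hx
      refine ⟨?_, aux_half_ball (γ s) d (r/4) hd hx⟩
      have h1 : dist x (γ s - (r/4) • d) < r/4 := hx
      have h2 : dist (γ s - (r/4) • d) (γ s) = r/4 := by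
        rw [dist_eq_norm]
        have : γ s - (r/4) • d - γ s = -((r/4) • d) := by abel
        rw [this, norm_neg, norm_smul, hd, mul_one, Real.norm_eq_abs,
          abs_of_pos (by positivity)]
      have h3 : dist (γ s) q₀ < r/4 := hs1
      have : dist x q₀ < r := by
        calc dist x q₀ ≤ dist x (γ s - (r/4) • d) + dist (γ s - (r/4) • d) (γ s)
            + dist (γ s) q₀ := dist_triangle4 _ _ _ _
        _ < r/4 + r/4 + r/4 := by linarith
        _ < r := by linarith
      exact interior_subset (hball this)
    have hlb := hδ_lb s (γ s - (r/4) • d) (r/4) hsub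
    rw [← hddef] at hlb
    linarith
  -- the gradient direction
  have hq₀f : f q₀ = 0 := by
    have := hq₀fr
    rw [hfbd] at this
    exact this
  have hLne : fderiv ℝ f q₀ ≠ 0 := hfgrad q₀ hq₀fr
  have hdiffq : DifferentiableAt ℝ f q₀ :=
    (hf.differentiable (by norm_num)).differentiableAt
  set n₀ : E3 := -(‖(InnerProductSpace.toDual ℝ E3).symm (fderiv ℝ f q₀)‖⁻¹) •
      (InnerProductSpace.toDual ℝ E3).symm (fderiv ℝ f q₀) with hn₀def
  have huniq : ∀ n : E3, ‖n‖ = 1 → (∀ x ∈ K, 0 ≤ ⟪x - q₀, n⟫) → n = n₀ :=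
    fun n h1 h2 => aux_unique_normal f q₀ hdiffq hq₀f K hKf hLne n h1 h2
  have hev_sph : ∀ᶠ s in 𝓝[>] a, deriv γ s ∈ Metric.sphere (0:E3) 1 := by
    filter_upwards [hIoo] with s hs
    simpa [mem_sphere_zero_iff_norm] using hγunit s hs
  -- Step B : every cluster point of deriv γ is a unit supporting normal at q₀
  have hcluster : ∀ n : E3, MapClusterPt n (𝓝[>] a) (deriv γ) →
      ‖n‖ = 1 ∧ ∀ x ∈ K, 0 ≤ ⟪x - q₀, n⟫ := by
    intro n hcl
    have hn1 : ‖n‖ = 1 := by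
      have h2 : Metric.sphere (0:E3) 1 ∈ map (deriv γ) (𝓝[>] a) := mem_map.2 hev_sph
      have h3 : ClusterPt n (𝓟 (Metric.sphere (0:E3) 1)) :=
        ClusterPt.mono hcl (le_principal_iff.2 h2)
      have h4 : n ∈ closure (Metric.sphere (0:E3) 1) := mem_closure_iff_clusterPt.2 h3
      rw [Metric.isClosed_sphere.closure_eq] at h4
      simpa [mem_sphere_zero_iff_norm] using h4
    refine ⟨hn1, ?_⟩
    by_contra hcon
    push_neg at hcon
    obtain ⟨x, hxK, hxneg⟩ := hcon
    obtain ⟨z, hz⟩ := hKint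
    -- build an interior point with strictly negative inner product with n
    set t : ℝ := min 1 ((-⟪x - q₀, n⟫) / (2 * (|⟪z - x, n⟫| + 1))) with htdef
    have ht0 : 0 < t := by
      apply lt_min one_pos
      apply div_pos (by linarith)
      positivity
    have ht1 : t ≤ 1 := min_le_left _ _
    set w : E3 := x + t • (z - x) with hwdef
    have hwint : w ∈ interior K := hKconv.add_smul_sub_mem_interior hxK hz ⟨ht0, ht1⟩
    have hwneg : ⟪w - q₀, n⟫ < 0 := by
      have he : ⟪w - q₀, n⟫ = ⟪x - q₀, n⟫ + t * ⟪z - x, n⟫ := by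
        rw [hwdef, show x + t • (z - x) - q₀ = (x - q₀) + t • (z - x) by abel,
          inner_add_left, real_inner_smul_left]
      have hb : t * ⟪z - x, n⟫ ≤ t * (|⟪z - x, n⟫| + 1) :=
        mul_le_mul_of_nonneg_left (by cases abs_cases ⟪z - x, n⟫ <;> linarith) ht0.le
      have ht2 : t ≤ (-⟪x - q₀, n⟫) / (2 * (|⟪z - x, n⟫| + 1)) := min_le_right _ _
      have hpos : (0:ℝ) < |⟪z - x, n⟫| + 1 := by positivity
      have hb2 : t * (|⟪z - x, n⟫| + 1) ≤ (-⟪x - q₀, n⟫) / 2 := by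
        rw [div_mul_eq_div_div] at ht2
        calc t * (|⟪z - x, n⟫| + 1) ≤ ((-⟪x - q₀, n⟫) / 2 / (|⟪z - x, n⟫| + 1)) *
            (|⟪z - x, n⟫| + 1) := mul_le_mul_of_nonneg_right ht2 hpos.le
        _ = (-⟪x - q₀, n⟫) / 2 := by field_simp
      rw [he]
      linarith
    clear hwdef htdef
    clear_value w t
    set c : ℝ := -⟪w - q₀, n⟫ with hcdef
    have hc0 : 0 < c := by linarith
    have hwq : ⟪w - q₀, n⟫ = -c := by rw [hcdef]; ring
    clear hcdef
    clear_value c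
    obtain ⟨ρ, hρ0, hρ⟩ := Metric.isOpen_iff.mp isOpen_interior w hwint
    set ρ' : ℝ := min ρ (c/4) with hρ'def
    have hρ'0 : 0 < ρ' := lt_min hρ0 (by positivity)
    have hρ'ρ : ρ' ≤ ρ := min_le_left _ _
    have hρ'c : ρ' ≤ c/4 := min_le_right _ _
    clear hρ'def
    clear_value ρ'
    have hv : 0 < (volume (Metric.ball (0:E3) ρ')).toReal :=
      ENNReal.toReal_pos (Metric.measure_ball_pos _ _ hρ'0).ne' measure_ball_lt_top.ne
    set ε : ℝ := c / (4 * (‖w - q₀‖ + 1)) with hεdef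
    have hε0 : 0 < ε := by positivity
    have hεbound : ‖w - q₀‖ * ε < c/4 := by
      have hq : (0:ℝ) < ‖w - q₀‖ + 1 := by positivity
      have heq : ‖w - q₀‖ * ε = c/4 * (‖w - q₀‖ / (‖w - q₀‖ + 1)) := by
        rw [hεdef]
        field_simp
      rw [heq]
      have hlt : ‖w - q₀‖ / (‖w - q₀‖ + 1) < 1 := by
        rw [div_lt_one hq]
        linarith
      nlinarith [hc0]
    clear hεdef
    clear_value ε
    have hevE : ∀ᶠ s in 𝓝[>] a, s ∈ Ioo a b ∧ γ s ∈ Metric.ball q₀ (c/4) ∧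
        (volume {x ∈ K | ⟪x - γ s, deriv γ s⟫ ≤ 0}).toReal
          < (volume (Metric.ball (0:E3) ρ')).toReal := by
      filter_upwards [eventually_mem_set.2 hIoo,
        hq₀.eventually_mem (Metric.ball_mem_nhds q₀ (show (0:ℝ) < c/4 by positivity)),
        hδ0.eventually_lt_const hv] with s h1 h2 h3
      exact ⟨h1, h2, h3⟩
    have hfreq : ∃ᶠ s in 𝓝[>] a, deriv γ s ∈ Metric.ball n ε :=
      (mapClusterPt_iff_frequently.mp hcl) _ (Metric.ball_mem_nhds n hε0)
    obtain ⟨s, hsball, hsIoo, hsdist, hsδ⟩ := (hfreq.and_eventually hevE).exists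
    have hd : ‖deriv γ s‖ = 1 := hγunit s hsIoo
    set d := deriv γ s with hddef
    have hdn : ‖d - n‖ < ε := by
      have := hsball
      rwa [Metric.mem_ball, dist_eq_norm] at this
    have hsub : Metric.ball w ρ' ⊆ {x ∈ K | ⟪x - γ s, d⟫ ≤ 0} := by
      intro y hy
      have hyρ : dist y w < ρ := lt_of_lt_of_le hy hρ'ρ
      refine ⟨interior_subset (hρ hyρ), ?_⟩
      have e2 : ⟪w - q₀, d⟫ = ⟪w - q₀, n⟫ + ⟪w - q₀, d - n⟫ := by
        rw [← inner_add_right]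
        congr 1
        abel
      have key : ⟪y - γ s, d⟫ = ⟪y - w, d⟫ + ⟪w - q₀, d⟫ + ⟪q₀ - γ s, d⟫ := by
        rw [← inner_add_left, ← inner_add_left]
        congr 1
        abel
      have b1 : |⟪y - w, d⟫| ≤ ‖y - w‖ := by
        calc |⟪y - w, d⟫| ≤ ‖y - w‖ * ‖d‖ := abs_real_inner_le_norm _ _
        _ = ‖y - w‖ := by rw [hd, mul_one]
      have b1' : ‖y - w‖ < c/4 := by
        have : dist y w < c/4 := lt_of_lt_of_le hy hρ'c
        rwa [dist_eq_norm] at this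
      have b2 : |⟪q₀ - γ s, d⟫| ≤ ‖q₀ - γ s‖ := by
        calc |⟪q₀ - γ s, d⟫| ≤ ‖q₀ - γ s‖ * ‖d‖ := abs_real_inner_le_norm _ _
        _ = ‖q₀ - γ s‖ := by rw [hd, mul_one]
      have b2' : ‖q₀ - γ s‖ < c/4 := by
        have : dist (γ s) q₀ < c/4 := hsdist
        rwa [dist_comm, dist_eq_norm] at this
      have b3 : |⟪w - q₀, d - n⟫| ≤ ‖w - q₀‖ * ‖d - n‖ := abs_real_inner_le_norm _ _
      have b3' : ‖w - q₀‖ * ‖d - n‖ < c/4 := by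
        have h1 : ‖w - q₀‖ * ‖d - n‖ ≤ ‖w - q₀‖ * ε :=
          mul_le_mul_of_nonneg_left hdn.le (norm_nonneg _)
        linarith [hεbound]
      rw [key, e2, hwq]
      have := abs_le.mp b1
      have := abs_le.mp b2
      have := abs_le.mp b3
      linarith
    have hlb := hδ_lb s w ρ' hsub
    rw [← hddef] at hlb
    linarith
  -- Step C : existence of a cluster point, giving the properties of n₀
  have hmapne : (map (deriv γ) (𝓝[>] a)).NeBot := map_neBot
  have hmaple : map (deriv γ) (𝓝[>] a) ≤ 𝓟 (Metric.sphere (0:E3) 1) :=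
    le_principal_iff.2 (mem_map.2 hev_sph)
  obtain ⟨m, hmS, hmcl⟩ := (isCompact_sphere (0:E3) 1).exists_clusterPt hmaple
  have hm : MapClusterPt m (𝓝[>] a) (deriv γ) := hmcl
  obtain ⟨hm1, hm2⟩ := hcluster m hm
  have hmeq : m = n₀ := huniq m hm1 hm2
  have hn₀1 : ‖n₀‖ = 1 := hmeq ▸ hm1
  have hn₀supp : ∀ x ∈ K, 0 ≤ ⟪x - q₀, n₀⟫ := hmeq ▸ hm2
  -- Step D : convergence of deriv γ to n₀
  have htend : Tendsto (deriv γ) (𝓝[>] a) (𝓝 n₀) := by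
    rw [tendsto_def]
    by_contra hcon
    push_neg at hcon
    obtain ⟨U, hU, hnU⟩ := hcon
    set V : Set E3 := interior U with hVdef
    have hn₀V : n₀ ∈ V := mem_interior_iff_mem_nhds.2 hU
    have hfreq : ∃ᶠ s in 𝓝[>] a, deriv γ s ∉ V := by
      by_contra h
      simp only [not_frequently, not_not] at h
      exact hnU (mem_of_superset h (fun s hs => (interior_subset hs : deriv γ s ∈ U)))
    have hfreqC : ∃ᶠ s in 𝓝[>] a,
        deriv γ s ∈ Metric.sphere (0:E3) 1 ∩ Vᶜ := by
      refine (hfreq.and_eventually hev_sph).mono fun s hs => ⟨hs.2, hs.1⟩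
    have hCcomp : IsCompact (Metric.sphere (0:E3) 1 ∩ Vᶜ) :=
      (isCompact_sphere (0:E3) 1).inter_right isOpen_interior.isClosed_compl
    have hne : (map (deriv γ) (𝓝[>] a) ⊓ 𝓟 (Metric.sphere (0:E3) 1 ∩ Vᶜ)).NeBot := by
      rw [← frequently_mem_iff_neBot]
      exact frequently_map.2 hfreqC
    haveI := hne
    obtain ⟨m', hm'C, hm'cl⟩ := hCcomp.exists_clusterPt
      (f := map (deriv γ) (𝓝[>] a) ⊓ 𝓟 (Metric.sphere (0:E3) 1 ∩ Vᶜ)) inf_le_right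
    have hm' : MapClusterPt m' (𝓝[>] a) (deriv γ) := hm'cl.mono inf_le_left
    obtain ⟨hm'1, hm'2⟩ := hcluster m' hm'
    have : m' = n₀ := huniq m' hm'1 hm'2
    exact hm'C.2 (this ▸ hn₀V)
  exact ⟨hq₀fr, n₀, htend, hn₀1, hn₀supp⟩
end
end
end

section
/- Let a, b, c > 0 and let K = {(x,y,z) ∈ ℝ³ : x²/a² + y²/b² + z²/c² ≤ 1} be the solid ellipsoid. Let p = (x₀, y₀, z₀) ∈ int(K) with p ≠ 0, and let n be the unit vector proportional to (x₀/a², y₀/b², z₀/c²). Then p is the centroid of the cross-section K ∩ H(n,p), where H(n,p) is the plane through p orthogonal to n. -/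
open MeasureTheory Set
open scoped RealInnerProductSpace

noncomputable section

def vec3 (x y z : ℝ) : E3 := (WithLp.equiv 2 (Fin 3 → ℝ)).symm ![x, y, z]

lemma ellipsoid_norm_bound (a b c r : ℝ) (ha : 0 < a) (hb : 0 < b) (hc : 0 < c)
    (har : a ≤ r) (hbr : b ≤ r) (hcr : c ≤ r) (x : E3)
    (hx : (x 0) ^ 2 / a ^ 2 + (x 1) ^ 2 / b ^ 2 + (x 2) ^ 2 / c ^ 2 ≤ 1) : ‖x‖ ≤ r := by
  have hrpos : 0 < r := lt_of_lt_of_le ha har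
  have hsq : ‖x‖ ^ 2 = x 0 ^ 2 + x 1 ^ 2 + x 2 ^ 2 := by
    rw [EuclideanSpace.norm_eq]
    rw [Real.sq_sqrt (by positivity)]
    simp [Fin.sum_univ_three, sq_abs]
  have e0 : x 0 ^ 2 ≤ r ^ 2 * (x 0 ^ 2 / a ^ 2) := by
    rw [mul_div_assoc', le_div_iff₀ (by positivity)]
    nlinarith [sq_nonneg (x 0), pow_le_pow_left₀ ha.le har 2]
  have e1 : x 1 ^ 2 ≤ r ^ 2 * (x 1 ^ 2 / b ^ 2) := by
    rw [mul_div_assoc', le_div_iff₀ (by positivity)]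
    nlinarith [sq_nonneg (x 1), pow_le_pow_left₀ hb.le hbr 2]
  have e2 : x 2 ^ 2 ≤ r ^ 2 * (x 2 ^ 2 / c ^ 2) := by
    rw [mul_div_assoc', le_div_iff₀ (by positivity)]
    nlinarith [sq_nonneg (x 2), pow_le_pow_left₀ hc.le hcr 2]
  have hx2 : ‖x‖ ^ 2 ≤ r ^ 2 := by
    nlinarith [mul_le_mul_of_nonneg_left hx (sq_nonneg r)]
  nlinarith [norm_nonneg x]

/-- Let `K` be the solid ellipsoid with semi-axes `a, b, c > 0`,
let `p = (x₀,y₀,z₀)` be a nonzero interior point and `n` the unit vector proportional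
to `(x₀/a², y₀/b², z₀/c²)`. Then `p` is the centroid of the cross-section
`K ∩ H(n,p)`, where `H(n,p)` is the plane through `p` orthogonal to `n`. -/
theorem ellipsoid_centroid_of_normal_section
    (a b c : ℝ) (ha : 0 < a) (hb : 0 < b) (hc : 0 < c)
    (K : Set E3)
    (hK : K = {x : E3 | (x 0) ^ 2 / a ^ 2 + (x 1) ^ 2 / b ^ 2 + (x 2) ^ 2 / c ^ 2 ≤ 1})
    (p : E3) (hp : p ∈ interior K) (hp0 : p ≠ 0)
    (m n : E3)
    (hm : m = vec3 (p 0 / a ^ 2) (p 1 / b ^ 2) (p 2 / c ^ 2))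
    (hn : n = ‖m‖⁻¹ • m)
    (H : Set E3) (hH : H = {x : E3 | ⟪x - p, n⟫ = 0}) :
    0 < (μH[2] (K ∩ H)).toReal ∧
      ((μH[2] (K ∩ H)).toReal)⁻¹ • (∫ x in K ∩ H, x ∂μH[2]) = p := by
  have ha' := ha.ne'
  have hb' := hb.ne'
  have hc' := hc.ne'
  -- coordinates of m
  have hm0 : m 0 = p 0 / a ^ 2 := by rw [hm]; simp [vec3]
  have hm1 : m 1 = p 1 / b ^ 2 := by rw [hm]; simp [vec3]
  have hm2 : m 2 = p 2 / c ^ 2 := by rw [hm]; simp [vec3]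
  have hmne : m ≠ 0 := by
    intro h
    apply hp0
    have h0 : ∀ i, m i = 0 := fun i => by rw [h]; rfl
    ext i
    fin_cases i
    · have := h0 0; rw [hm0] at this; field_simp at this; simpa using this
    · have := h0 1; rw [hm1] at this; field_simp at this; simpa using this
    · have := h0 2; rw [hm2] at this; field_simp at this; simpa using this
  have hmnorm : ‖m‖ ≠ 0 := norm_ne_zero_iff.mpr hmne
  have hn1 : ‖n‖ = 1 := by
    rw [hn, norm_smul, norm_inv, norm_norm, inv_mul_cancel₀ hmnorm]
  have hnne : n ≠ 0 := by
    intro h; rw [h, norm_zero] at hn1; exact one_ne_zero hn1.symm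
  -- inner product with m in coordinates
  have hinner : ∀ y : E3, ⟪y, m⟫ = y 0 * (p 0 / a ^ 2) + y 1 * (p 1 / b ^ 2)
      + y 2 * (p 2 / c ^ 2) := by
    intro y
    simp [PiLp.inner_apply, Fin.sum_univ_three, hm0, hm1, hm2]
    ring
  -- membership in H gives orthogonality to m
  have hHm : ∀ x : E3, x ∈ H → ⟪x - p, m⟫ = 0 := by
    intro x hx
    rw [hH] at hx
    have : ⟪x - p, n⟫ = ‖m‖⁻¹ * ⟪x - p, m⟫ := by rw [hn, real_inner_smul_right]
    rw [hx] at this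
    have := this.symm
    rcases mul_eq_zero.mp this with h | h
    · exact absurd (inv_eq_zero.mp h) hmnorm
    · exact h
  set S : Set E3 := K ∩ H with hS
  -- the reflection through p
  have hrefl : ∀ x ∈ S, p + (p - x) ∈ S := by
    rintro x ⟨hxK, hxH⟩
    have hxm : ⟪x - p, m⟫ = 0 := hHm x hxH
    rw [hinner] at hxm
    simp only [PiLp.sub_apply] at hxm
    rw [hK] at hxK
    simp only [mem_setOf_eq] at hxK
    constructor
    · rw [hK]
      simp only [mem_setOf_eq, PiLp.add_apply, PiLp.sub_apply]
      have key : (p 0 + (p 0 - x 0)) ^ 2 / a ^ 2 + (p 1 + (p 1 - x 1)) ^ 2 / b ^ 2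
          + (p 2 + (p 2 - x 2)) ^ 2 / c ^ 2
          = (x 0 ^ 2 / a ^ 2 + x 1 ^ 2 / b ^ 2 + x 2 ^ 2 / c ^ 2)
            - 4 * ((x 0 - p 0) * (p 0 / a ^ 2) + (x 1 - p 1) * (p 1 / b ^ 2)
              + (x 2 - p 2) * (p 2 / c ^ 2)) := by
        field_simp
        ring
      rw [key, hxm]
      linarith
    · rw [hH]
      simp only [mem_setOf_eq]
      have heq : (p + (p - x)) - p = -(x - p) := by abel
      rw [heq, inner_neg_left]
      rw [hH] at hxH
      simp only [mem_setOf_eq] at hxH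
      rw [hxH, neg_zero]
  -- reflection as an isometry equivalence
  have habel : ∀ x : E3, p + (p - (p + (p - x))) = x := by intro x; abel
  let R : E3 ≃ᵢ E3 :=
    { toFun := fun x => p + (p - x)
      invFun := fun x => p + (p - x)
      left_inv := habel
      right_inv := habel
      isometry_toFun := Isometry.of_dist_eq (fun x y => by
        simp only [dist_add_left, dist_sub_left]) }
  have hRS : R ⁻¹' S = S := by
    ext x
    constructor
    · intro hx
      have : x = p + (p - (p + (p - x))) := (habel x).symm
      rw [this]
      exact hrefl _ hx
    · intro hx
      exact hrefl x hx
  -- K is closed and bounded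
  have hKclosed : IsClosed K := by
    rw [hK]
    have hcont : Continuous fun x : E3 => (x 0) ^ 2 / a ^ 2 + (x 1) ^ 2 / b ^ 2
        + (x 2) ^ 2 / c ^ 2 := by fun_prop
    exact isClosed_le hcont continuous_const
  have hHclosed : IsClosed H := by
    rw [hH]
    have hcont : Continuous fun x : E3 => ⟪x - p, n⟫ := by
      exact Continuous.inner (continuous_id.sub continuous_const) continuous_const
    exact isClosed_eq hcont continuous_const
  have hSmeas : MeasurableSet S :=
    (hKclosed.inter hHclosed).measurableSet
  set r : ℝ := max a (max b c) with hr
  have har : a ≤ r := le_max_left _ _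
  have hbr : b ≤ r := le_trans (le_max_left _ _) (le_max_right _ _)
  have hcr : c ≤ r := le_trans (le_max_right _ _) (le_max_right _ _)
  have hrpos : 0 < r := lt_of_lt_of_le ha har
  have hKbound : ∀ x ∈ K, ‖x‖ ≤ r := by
    intro x hx
    rw [hK] at hx
    exact ellipsoid_norm_bound a b c r ha hb hc har hbr hcr x hx
  -- parametrize the plane H
  set W : Submodule ℝ E3 := (ℝ ∙ n)ᗮ with hWdef
  have hWrank : Module.finrank ℝ W = 2 := by
    have h1 : Module.finrank ℝ (ℝ ∙ n) = 1 := finrank_span_singleton hnne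
    have h2 : Module.finrank ℝ (ℝ ∙ n) + Module.finrank ℝ W = Module.finrank ℝ E3 :=
      Submodule.finrank_add_finrank_orthogonal _
    have h3 : Module.finrank ℝ E3 = 3 := by simp
    omega
  let B : OrthonormalBasis (Fin 2) ℝ W := (stdOrthonormalBasis ℝ W).reindex
    (finCongr hWrank)
  let L : EuclideanSpace ℝ (Fin 2) →ₗᵢ[ℝ] E3 :=
    W.subtypeₗᵢ.comp B.repr.symm.toLinearIsometry
  have hLW : ∀ y, L y ∈ W := fun y => (B.repr.symm y).2
  set φ : EuclideanSpace ℝ (Fin 2) → E3 := fun y => p + L y with hφ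
  have hφiso : Isometry φ := Isometry.of_dist_eq (fun y1 y2 => by
    rw [hφ]
    simp only [dist_add_left]
    exact L.isometry.dist_eq _ _)
  have hφrange : range φ = H := by
    rw [hH]
    ext x
    constructor
    · rintro ⟨y, rfl⟩
      simp only [mem_setOf_eq, hφ]
      have : p + L y - p = (L y : E3) := by abel
      rw [this]
      rw [real_inner_comm]
      exact (Submodule.mem_orthogonal _ _).mp (hLW y) n (Submodule.mem_span_singleton_self n)
    · intro hx
      simp only [mem_setOf_eq] at hx
      have hxW : x - p ∈ W := by
        rw [hWdef]
        rw [Submodule.mem_orthogonal_singleton_iff_inner_right]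
        rw [real_inner_comm]
        exact hx
      refine ⟨B.repr ⟨x - p, hxW⟩, ?_⟩
      rw [hφ]
      simp only [L, LinearIsometry.coe_comp, Function.comp_apply,
        LinearIsometryEquiv.coe_toLinearIsometry, LinearIsometryEquiv.symm_apply_apply,
        Submodule.coe_subtypeₗᵢ, Submodule.coe_subtype]
      abel
  have hSsubφ : S ⊆ range φ := by
    rw [hφrange]
    exact inter_subset_right
  have hSimage : S = φ '' (φ ⁻¹' S) := by
    rw [image_preimage_eq_inter_range, inter_eq_self_of_subset_left hSsubφ]
  have hmeasS : μH[2] S = μH[2] (φ ⁻¹' S) := by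
    conv_lhs => rw [hSimage]
    exact hφiso.hausdorffMeasure_image (Or.inl (by norm_num)) _
  -- μH[2] on EuclideanSpace ℝ (Fin 2) is a Haar measure
  have hfr : ((Module.finrank ℝ (EuclideanSpace ℝ (Fin 2)) : ℕ) : ℝ) = 2 := by simp
  have hHaarEq : (μH[2] : Measure (EuclideanSpace ℝ (Fin 2)))
      = μH[(Module.finrank ℝ (EuclideanSpace ℝ (Fin 2)) : ℝ)] := by rw [hfr]
  have hpos : 0 < μH[2] S := by
    rw [hmeasS]
    rcases Metric.mem_nhds_iff.mp (mem_interior_iff_mem_nhds.mp hp) with ⟨ε, εpos, hball⟩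
    have hsub : Metric.ball (0 : EuclideanSpace ℝ (Fin 2)) ε ⊆ φ ⁻¹' S := by
      intro y hy
      simp only [Metric.mem_ball, dist_zero_right] at hy
      have hdist : dist (φ y) p < ε := by
        have : φ (0 : EuclideanSpace ℝ (Fin 2)) = p := by
          rw [hφ]; simp
        rw [← this]
        rw [hφiso.dist_eq]
        simpa using hy
      constructor
      · exact hball (Metric.mem_ball.mpr hdist)
      · rw [← hφrange]; exact mem_range_self y
    calc (0 : ENNReal) < μH[2] (Metric.ball (0 : EuclideanSpace ℝ (Fin 2)) ε) := by
          rw [hHaarEq]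
          exact Metric.isOpen_ball.measure_pos _ (Metric.nonempty_ball.mpr εpos)
      _ ≤ μH[2] (φ ⁻¹' S) := measure_mono hsub
  have hfin : μH[2] S < ⊤ := by
    rw [hmeasS]
    have hsub : φ ⁻¹' S ⊆ Metric.closedBall (0 : EuclideanSpace ℝ (Fin 2)) (r + ‖p‖) := by
      intro y hy
      simp only [Metric.mem_closedBall, dist_zero_right]
      have h1 : dist (φ y) p = ‖y‖ := by
        have h0 : φ (0 : EuclideanSpace ℝ (Fin 2)) = p := by rw [hφ]; simp
        rw [← h0, hφiso.dist_eq]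
        simp
      have h2 : ‖φ y‖ ≤ r := hKbound _ hy.1
      calc ‖y‖ = dist (φ y) p := h1.symm
        _ ≤ ‖φ y‖ + ‖p‖ := by
            rw [dist_eq_norm]
            exact (norm_sub_le _ _)
        _ ≤ r + ‖p‖ := by linarith
    calc μH[2] (φ ⁻¹' S) ≤ μH[2] (Metric.closedBall (0 : EuclideanSpace ℝ (Fin 2)) (r + ‖p‖)) :=
          measure_mono hsub
      _ < ⊤ := by
          rw [hHaarEq]
          exact (isCompact_closedBall _ _).measure_lt_top
  have htpos : 0 < (μH[2] S).toReal := ENNReal.toReal_pos hpos.ne' hfin.ne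
  refine ⟨htpos, ?_⟩
  -- integrability
  have hint : IntegrableOn (fun x : E3 => x) S μH[2] := by
    apply Measure.integrableOn_of_bounded hfin.ne
      (continuous_id.aestronglyMeasurable) (M := r)
    filter_upwards [ae_restrict_mem hSmeas] with x hx
    exact hKbound x hx.1
  have hintc : IntegrableOn (fun _ : E3 => p + p) S μH[2] :=
    integrableOn_const hfin.ne
  have hintR : IntegrableOn (fun x : E3 => p + (p - x)) S μH[2] := by
    have : (fun x : E3 => p + (p - x)) = fun x : E3 => (p + p) - x := by
      funext x; abel
    rw [this]
    exact hintc.sub hint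
  -- symmetry of the integral
  have hMP : MeasurePreserving R μH[2] μH[2] :=
    R.measurePreserving_hausdorffMeasure 2
  have hemb : MeasurableEmbedding R := R.toHomeomorph.measurableEmbedding
  have hsymInt : ∫ x in S, (p + (p - x)) ∂μH[2] = ∫ x in S, x ∂μH[2] := by
    have := hMP.setIntegral_preimage_emb hemb (fun x => x) S
    rw [hRS] at this
    exact this
  have hsum : ∫ x in S, ((p + p) : E3) ∂μH[2]
      = (∫ x in S, (p + (p - x)) ∂μH[2]) + ∫ x in S, x ∂μH[2] := by
    rw [← integral_add hintR hint]
    congr 1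
    funext x
    abel
  rw [setIntegral_const, hsymInt] at hsum
  have h2smul : (μH[2] S).toReal • (p + p) = (2 : ℝ) • ∫ x in S, x ∂μH[2] := by
    rw [← measureReal_def, hsum, two_smul]
  have hIeq : ∫ x in S, x ∂μH[2] = (μH[2] S).toReal • p := by
    have h2 : (2 : ℝ) • ((μH[2] S).toReal • p) = (2 : ℝ) • ∫ x in S, x ∂μH[2] := by
      rw [← h2smul, smul_comm]
      congr 1
      rw [two_smul]
    have := smul_right_injective E3 (two_ne_zero (α := ℝ)) h2
    exact this.symm
  rw [hIeq, inv_smul_smul₀ htpos.ne']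
end
end

section
/- Let a, b, c > 0 and K = {(x,y,z) : x²/a² + y²/b² + z²/c² ≤ 1}, and let p₀ = (x₀, y₀, z₀) ∈ int(K) with x₀ > 0. Then there exists ε > 0 such that the curve Γ = {(x, y₀·(x/x₀)^{a²/b²}, z₀·(x/x₀)^{a²/c²}) : x ∈ (0, x₀ + ε)}, parametrized by arc length, is a centroid curve of K passing through p₀; that is, at each point q of Γ, the plane through q orthogonal to the tangent direction of Γ at q intersects K in a cross-section whose centroid is q. -/
open MeasureTheory Set
open scoped RealInnerProductSpace NNReal ENNReal Topology

noncomputable section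

@[simp] lemma vec3_apply0 (x y z : ℝ) : vec3 x y z 0 = x := rfl
@[simp] lemma vec3_apply1 (x y z : ℝ) : vec3 x y z 1 = y := rfl
@[simp] lemma vec3_apply2 (x y z : ℝ) : vec3 x y z 2 = z := rfl

lemma inner_E3 (u v : E3) : ⟪u, v⟫ = u 0 * v 0 + u 1 * v 1 + u 2 * v 2 := by
  simp [PiLp.inner_apply, Fin.sum_univ_three, RCLike.inner_apply, mul_comm]

lemma norm_E3_sq (u : E3) : ‖u‖ ^ 2 = u 0 ^ 2 + u 1 ^ 2 + u 2 ^ 2 := by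
  rw [← real_inner_self_eq_norm_sq, inner_E3]; ring

lemma abs_coord_le_norm (u : E3) (i : Fin 3) : |u i| ≤ ‖u‖ := by
  rw [← Real.sqrt_sq_eq_abs, ← Real.sqrt_sq (norm_nonneg u), norm_E3_sq]
  apply Real.sqrt_le_sqrt
  fin_cases i <;> simp <;> nlinarith [sq_nonneg (u 0), sq_nonneg (u 1), sq_nonneg (u 2)]

lemma norm_E3_le (u : E3) : ‖u‖ ≤ |u 0| + |u 1| + |u 2| := by
  have h : ‖u‖ ^ 2 ≤ (|u 0| + |u 1| + |u 2|) ^ 2 := by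
    rw [norm_E3_sq]
    nlinarith [abs_nonneg (u 0), abs_nonneg (u 1), abs_nonneg (u 2), sq_abs (u 0), sq_abs (u 1),
      sq_abs (u 2), abs_mul_abs_self (u 0)]
  nlinarith [norm_nonneg u, abs_nonneg (u 0), abs_nonneg (u 1), abs_nonneg (u 2)]

abbrev E2 := EuclideanSpace ℝ (Fin 2)

lemma hausdorff_sup2 : (μH[2] : Measure (Fin 2 → ℝ)) = volume := by
  have := MeasureTheory.hausdorffMeasure_pi_real (ι := Fin 2)
  simpa using this

lemma euc2_pos (ρ : ℝ) (hρ : 0 < ρ) (T : Set E2) (hT : Metric.closedBall 0 ρ ⊆ T) :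
    0 < μH[2] T := by
  set e := WithLp.equiv 2 (Fin 2 → ℝ)
  have hlip : LipschitzWith 1 e := PiLp.lipschitzWith_ofLp 2 _
  have h1 : μH[2] (e '' Metric.closedBall 0 ρ) ≤ μH[2] (Metric.closedBall (0:E2) ρ) := by
    simpa using hlip.hausdorffMeasure_image_le (by norm_num) (Metric.closedBall 0 ρ)
  have h2 : Metric.closedBall (0 : Fin 2 → ℝ) (ρ/2) ⊆ e '' Metric.closedBall 0 ρ := by
    intro v hv
    refine ⟨e.symm v, ?_, by simp⟩
    simp only [Metric.mem_closedBall, dist_zero_right] at hv ⊢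
    have hvi : ∀ i, |v i| ≤ ρ/2 := by
      intro i
      calc |v i| = ‖v i‖ := rfl
        _ ≤ ‖v‖ := norm_le_pi_norm v i
        _ ≤ ρ/2 := hv
    have : ‖(e.symm v : E2)‖^2 ≤ ρ^2 := by
      have h0 := hvi 0; have h1 := hvi 1
      have : ‖(e.symm v : E2)‖^2 = (v 0)^2 + (v 1)^2 := by
        rw [EuclideanSpace.norm_eq, Real.sq_sqrt (by positivity)]
        simp [Fin.sum_univ_two, e]
      rw [this]
      nlinarith [abs_nonneg (v 0), abs_nonneg (v 1), sq_abs (v 0), sq_abs (v 1)]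
    nlinarith [norm_nonneg (e.symm v : E2)]
  have hpos : 0 < μH[2] (Metric.closedBall (0 : Fin 2 → ℝ) (ρ/2)) := by
    rw [hausdorff_sup2]
    exact Metric.measure_closedBall_pos volume _ (by positivity)
  calc 0 < μH[2] (Metric.closedBall (0 : Fin 2 → ℝ) (ρ/2)) := hpos
    _ ≤ μH[2] (e '' Metric.closedBall 0 ρ) := measure_mono h2
    _ ≤ μH[2] (Metric.closedBall (0:E2) ρ) := h1
    _ ≤ μH[2] T := measure_mono hT

lemma euc2_fin (R : ℝ) (T : Set E2) (hT : T ⊆ Metric.closedBall 0 R) : μH[2] T < ⊤ := by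
  set e := WithLp.equiv 2 (Fin 2 → ℝ)
  have hanti := PiLp.antilipschitzWith_ofLp 2 (fun _ : Fin 2 => ℝ)
  have h1 := hanti.le_hausdorffMeasure_image (show (0:ℝ) ≤ 2 by norm_num) T
  have h2 : e '' T ⊆ Metric.closedBall 0 (max R 0) := by
    rintro _ ⟨u, hu, rfl⟩
    have := hT hu
    simp only [Metric.mem_closedBall, dist_zero_right] at this ⊢
    calc ‖e u‖ ≤ ‖u‖ := by
          have := (PiLp.lipschitzWith_ofLp 2 (fun _ : Fin 2 => ℝ)).dist_le_mul u 0
          simpa [e] using this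
      _ ≤ R := this
      _ ≤ max R 0 := le_max_left _ _
  have h3 : μH[2] (e '' T) < ⊤ := by
    calc μH[2] (e '' T) ≤ μH[2] (Metric.closedBall (0 : Fin 2 → ℝ) (max R 0)) := measure_mono h2
      _ < ⊤ := by rw [hausdorff_sup2]; exact measure_closedBall_lt_top
  refine lt_of_le_of_lt h1 ?_
  apply ENNReal.mul_lt_top _ h3
  exact ENNReal.rpow_lt_top_of_nonneg (by norm_num) (by simp)

lemma exists_plane_isometry (m n : E3) (hn : n ≠ 0) :
    ∃ φ : EuclideanSpace ℝ (Fin 2) → E3, Isometry φ ∧ φ 0 = m ∧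
      range φ = {x : E3 | ⟪x - m, n⟫ = 0} := by
  haveI : Fact (Module.finrank ℝ E3 = 2 + 1) := ⟨by simp [finrank_euclideanSpace_fin]⟩
  set W : Submodule ℝ E3 := (ℝ ∙ n)ᗮ with hW
  let B : OrthonormalBasis (Fin 2) ℝ W := OrthonormalBasis.fromOrthogonalSpanSingleton 2 hn
  let ψ : EuclideanSpace ℝ (Fin 2) ≃ₗᵢ[ℝ] W := B.repr.symm
  refine ⟨fun u => m + (ψ u : E3), ?_, by simp, ?_⟩
  · apply Isometry.of_dist_eq
    intro u v
    rw [dist_eq_norm, dist_eq_norm]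
    have : (m + (ψ u : E3)) - (m + (ψ v : E3)) = ((ψ u - ψ v : W) : E3) := by
      push_cast; abel
    rw [this, ← map_sub]
    rw [Submodule.norm_coe]
    exact ψ.norm_map _
  · ext x
    simp only [mem_range, mem_setOf_eq]
    constructor
    · rintro ⟨u, rfl⟩
      have hm : ((ψ u : E3)) ∈ W := (ψ u).2
      rw [Submodule.mem_orthogonal_singleton_iff_inner_left] at hm
      simpa using hm
    · intro hx
      have hm : x - m ∈ W := by
        rw [hW, Submodule.mem_orthogonal_singleton_iff_inner_left]; exact hx
      exact ⟨ψ.symm ⟨x - m, hm⟩, by simp⟩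

lemma section_pos_fin (Kset : Set E3) (m n : E3) (hn : n ≠ 0) (ρ R : ℝ) (hρ : 0 < ρ)
    (hball : Metric.closedBall m ρ ⊆ Kset) (hbdd : ∀ x ∈ Kset, ‖x‖ ≤ R) :
    0 < μH[2] (Kset ∩ {x : E3 | ⟪x - m, n⟫ = 0}) ∧
      μH[2] (Kset ∩ {x : E3 | ⟪x - m, n⟫ = 0}) < ⊤ := by
  obtain ⟨φ, hiso, hφ0, hrange⟩ := exists_plane_isometry m n hn
  set T : Set E2 := φ ⁻¹' Kset with hT
  have himg : φ '' T = Kset ∩ {x : E3 | ⟪x - m, n⟫ = 0} := by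
    rw [hT, image_preimage_eq_inter_range, hrange]
  have hmeas : μH[2] (Kset ∩ {x : E3 | ⟪x - m, n⟫ = 0}) = μH[2] T := by
    rw [← himg]
    exact hiso.hausdorffMeasure_image (Or.inl (by norm_num)) T
  rw [hmeas]
  constructor
  · apply euc2_pos ρ hρ
    intro u hu
    apply hball
    simp only [Metric.mem_closedBall] at hu ⊢
    calc dist (φ u) m = dist (φ u) (φ 0) := by rw [hφ0]
      _ = dist u 0 := hiso.dist_eq u 0
      _ ≤ ρ := hu
  · apply euc2_fin (R + ‖m‖)
    intro u hu
    simp only [Metric.mem_closedBall]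
    calc dist u 0 = dist (φ u) (φ 0) := (hiso.dist_eq u 0).symm
      _ = dist (φ u) m := by rw [hφ0]
      _ ≤ ‖φ u‖ + ‖m‖ := dist_le_norm_add_norm _ _
      _ ≤ R + ‖m‖ := by have := hbdd (φ u) hu; linarith

def ptRefl (m : E3) : E3 ≃ᵢ E3 where
  toFun x := (2:ℝ) • m - x
  invFun x := (2:ℝ) • m - x
  left_inv x := sub_sub_cancel _ _
  right_inv x := sub_sub_cancel _ _
  isometry_toFun := Isometry.of_dist_eq fun x y => by
    rw [dist_eq_norm, dist_eq_norm]
    have : ((2:ℝ) • m - x) - ((2:ℝ) • m - y) = y - x := by abel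
    rw [this, norm_sub_rev]

lemma centroid_of_symm (S : Set E3) (hmeas : MeasurableSet S) (m : E3)
    (hsymm : ∀ x ∈ S, (2:ℝ) • m - x ∈ S) (h0 : 0 < μH[2] S) (hfin : μH[2] S < ⊤)
    (R : ℝ) (hbdd : ∀ x ∈ S, ‖x‖ ≤ R) :
    0 < (μH[2] S).toReal ∧
      ((μH[2] S).toReal)⁻¹ • (∫ x in S, x ∂μH[2]) = m := by
  have htR : 0 < (μH[2] S).toReal := ENNReal.toReal_pos h0.ne' hfin.ne
  refine ⟨htR, ?_⟩
  set Rf := ptRefl m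
  have hpre : Rf ⁻¹' S = S := by
    ext x
    constructor
    · intro hx
      have : Rf x ∈ S := hx
      have h2 : (2:ℝ) • m - Rf x ∈ S := hsymm _ this
      simpa [Rf, ptRefl] using h2
    · intro hx; exact hsymm x hx
  have hmp : MeasurePreserving Rf (μH[2] : Measure E3) μH[2] := by
    refine ⟨Rf.continuous.measurable, ?_⟩
    ext s hs
    rw [Measure.map_apply Rf.continuous.measurable hs]
    exact Rf.hausdorffMeasure_preimage 2 s
  have hemb : MeasurableEmbedding Rf := Rf.toHomeomorph.measurableEmbedding
  have hint : IntegrableOn (fun x : E3 => x) S μH[2] := by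
    apply Measure.integrableOn_of_bounded hfin.ne
    · exact aestronglyMeasurable_id
    · exact (ae_restrict_iff' hmeas).2 (Filter.Eventually.of_forall hbdd)
  have key : ∫ x in S, ((2:ℝ) • m - x) ∂μH[2] = ∫ x in S, x ∂μH[2] := by
    have h := hmp.setIntegral_preimage_emb hemb (fun x : E3 => x) S
    calc ∫ x in S, ((2:ℝ) • m - x) ∂μH[2] = ∫ x in Rf ⁻¹' S, Rf x ∂μH[2] := by
          rw [hpre]; rfl
      _ = ∫ y in S, y ∂μH[2] := h
  have hconst : IntegrableOn (fun _ : E3 => (2:ℝ) • m) S μH[2] :=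
    integrableOn_const hfin.ne
  rw [integral_sub hconst hint, setIntegral_const] at key
  set I := ∫ x in S, x ∂μH[2] with hI
  set t := (μH[2] S).toReal with ht
  have h2 : (2:ℝ) • I = (2 * t) • m := by
    have h4 : t • ((2:ℝ) • m) = I + I := by nth_rewrite 2 [← key]; abel
    rw [two_smul, ← h4, smul_smul, mul_comm]
  have hIm : I = t • m := by
    have h3 := congrArg (fun v => (2:ℝ)⁻¹ • v) h2
    simpa [smul_smul, ← mul_assoc, inv_mul_cancel₀ (two_ne_zero (α := ℝ))] using h3
  rw [hIm, smul_smul, inv_mul_cancel₀ htR.ne', one_smul]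

section Curve
variable (x₀ y₀ z₀ q r : ℝ)

def crv : ℝ → E3 := fun x => vec3 x (y₀ * (x/x₀)^q) (z₀ * (x/x₀)^r)
def crv' : ℝ → E3 := fun x =>
  vec3 1 (y₀ * (q * (x/x₀)^(q-1) * (1/x₀))) (z₀ * (r * (x/x₀)^(r-1) * (1/x₀)))

variable {x₀ y₀ z₀ q r}

lemma crv_hasDerivAt (hx₀ : 0 < x₀) {x : ℝ} (hx : 0 < x) :
    HasDerivAt (crv x₀ y₀ z₀ q r) (crv' x₀ y₀ z₀ q r x) x := by
  have h1 : HasDerivAt (fun x : ℝ => x / x₀) (1/x₀) x := (hasDerivAt_id x).div_const x₀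
  have hne : x / x₀ ≠ 0 := ne_of_gt (div_pos hx hx₀)
  have h2 : HasDerivAt (fun x : ℝ => y₀ * (x/x₀)^q)
      (y₀ * (q * (x/x₀)^(q-1) * (1/x₀))) x := by
    have := (h1.rpow_const (p := q) (Or.inl hne)).const_mul y₀
    exact this.congr_deriv (by ring)
  have h3 : HasDerivAt (fun x : ℝ => z₀ * (x/x₀)^r)
      (z₀ * (r * (x/x₀)^(r-1) * (1/x₀))) x := by
    have := (h1.rpow_const (p := r) (Or.inl hne)).const_mul z₀
    exact this.congr_deriv (by ring)
  have hF : HasDerivAt (fun x : ℝ => ![x, y₀ * (x/x₀)^q, z₀ * (x/x₀)^r])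
      (![1, y₀ * (q * (x/x₀)^(q-1) * (1/x₀)), z₀ * (r * (x/x₀)^(r-1) * (1/x₀))]) x := by
    rw [hasDerivAt_pi]
    intro i
    fin_cases i
    · simpa using hasDerivAt_id' x
    · simpa using h2
    · simpa using h3
  have := ((PiLp.continuousLinearEquiv 2 ℝ (fun _ : Fin 3 => ℝ)).symm.toContinuousLinearMap.hasFDerivAt).comp_hasDerivAt x hF
  exact this

lemma crv'_continuousOn (hx₀ : 0 < x₀) : ContinuousOn (crv' x₀ y₀ z₀ q r) (Ioi 0) := by
  intro x hx
  have hne : x / x₀ ≠ 0 := ne_of_gt (div_pos hx hx₀)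
  have hc : ∀ p : ℝ, ContinuousAt (fun x : ℝ => (x/x₀)^p) x := by
    intro p
    exact (continuousAt_id.div_const x₀).rpow_const (Or.inl hne)
  apply ContinuousAt.continuousWithinAt
  apply ContinuousAt.comp (g := (WithLp.equiv 2 (Fin 3 → ℝ)).symm)
  · exact ((PiLp.continuousLinearEquiv 2 ℝ (fun _ : Fin 3 => ℝ)).symm.continuous).continuousAt
  · apply continuousAt_pi.2
    intro i
    fin_cases i
    · simpa using continuousAt_const
    · simp only [Matrix.cons_val_one, Matrix.head_cons]
      exact continuousAt_const.mul ((continuousAt_const.mul (hc (q-1))).mul continuousAt_const)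
    · simp only [Matrix.cons_val_two, Matrix.tail_cons, Matrix.head_cons]
      exact continuousAt_const.mul ((continuousAt_const.mul (hc (r-1))).mul continuousAt_const)
end Curve

set_option maxHeartbeats 1000000 in
/-- In the solid ellipsoid `K` with semi-axes `a, b, c > 0`, for every
interior point `p₀ = (x₀,y₀,z₀)` with `x₀ > 0` there is `ε > 0` such that the curve
`x ↦ (x, y₀·(x/x₀)^{a²/b²}, z₀·(x/x₀)^{a²/c²})`, `x ∈ (0, x₀+ε)`, parametrized by arc
length, is a centroid curve of `K` passing through `p₀`. -/
theorem ellipsoid_centroid_curve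
    (a b c : ℝ) (ha : 0 < a) (hb : 0 < b) (hc : 0 < c)
    (K : Set E3)
    (hK : K = {x : E3 | (x 0) ^ 2 / a ^ 2 + (x 1) ^ 2 / b ^ 2 + (x 2) ^ 2 / c ^ 2 ≤ 1})
    (x₀ y₀ z₀ : ℝ) (hx₀ : 0 < x₀)
    (p₀ : E3) (hp₀def : p₀ = vec3 x₀ y₀ z₀) (hp₀ : p₀ ∈ interior K) :
    ∃ ε > (0:ℝ), ∃ (α β : ℝ) (γ : ℝ → E3), α < β ∧
      -- `γ` is a regular unit-speed parametrization of the given curve: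
      ContDiffOn ℝ 1 γ (Ioo α β) ∧
      (∀ s ∈ Ioo α β, ‖deriv γ s‖ = 1) ∧
      γ '' Ioo α β =
        {q : E3 | ∃ x ∈ Ioo (0:ℝ) (x₀ + ε),
          q = vec3 x (y₀ * (x / x₀) ^ (a ^ 2 / b ^ 2)) (z₀ * (x / x₀) ^ (a ^ 2 / c ^ 2))} ∧
      -- it passes through `p₀`:
      (∃ s₀ ∈ Ioo α β, γ s₀ = p₀) ∧
      -- it is a centroid curve of `K`:
      (∀ s ∈ Ioo α β,
        0 < (μH[2] (K ∩ {x : E3 | ⟪x - γ s, deriv γ s⟫ = 0})).toReal ∧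
        ((μH[2] (K ∩ {x : E3 | ⟪x - γ s, deriv γ s⟫ = 0})).toReal)⁻¹ •
          (∫ x in K ∩ {x : E3 | ⟪x - γ s, deriv γ s⟫ = 0}, x ∂μH[2]) = γ s) := by
  set q : ℝ := a^2/b^2 with hqdef
  set r : ℝ := a^2/c^2 with hrdef
  have hq : 0 < q := by positivity
  have hr : 0 < r := by positivity
  set Qf : E3 → ℝ := fun v => (v 0)^2/a^2 + (v 1)^2/b^2 + (v 2)^2/c^2 with hQfdef
  have hKQ : K = {v : E3 | Qf v ≤ 1} := hK
  have hQcont : Continuous Qf := by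
    have h0 : ∀ i : Fin 3, Continuous fun v : E3 => v i := fun i =>
      (EuclideanSpace.proj i : E3 →L[ℝ] ℝ).continuous
    exact ((((h0 0).pow 2).div_const _).add (((h0 1).pow 2).div_const _)).add
      (((h0 2).pow 2).div_const _)
  -- `Qf p₀ < 1`
  have hp₀K : Qf p₀ ≤ 1 := by
    have := interior_subset hp₀
    rw [hKQ] at this; exact this
  have hp₀0 : p₀ 0 = x₀ := by rw [hp₀def]; simp
  have hp₀norm : 0 < ‖p₀‖ := by
    have h1 := abs_coord_le_norm p₀ 0
    rw [hp₀0] at h1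
    have := abs_nonneg x₀
    calc (0:ℝ) < x₀ := hx₀
      _ ≤ |x₀| := le_abs_self x₀
      _ ≤ ‖p₀‖ := h1
  obtain ⟨δ, hδ, hballδ⟩ : ∃ δ > 0, Metric.ball p₀ δ ⊆ K := by
    rw [mem_interior_iff_mem_nhds] at hp₀
    exact Metric.mem_nhds_iff.1 hp₀
  have hQp₀ : Qf p₀ < 1 := by
    set t : ℝ := 1 + δ/(2*‖p₀‖) with htdef
    have ht1 : 1 < t := by
      rw [htdef]
      have : 0 < δ/(2*‖p₀‖) := by positivity
      linarith
    have htp₀ : t • p₀ ∈ Metric.ball p₀ δ := by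
      rw [Metric.mem_ball, dist_eq_norm]
      have h2 : t • p₀ - p₀ = (t - 1) • p₀ := by rw [sub_smul, one_smul]
      rw [h2, norm_smul, Real.norm_eq_abs]
      have h3 : t - 1 = δ/(2*‖p₀‖) := by rw [htdef]; ring
      rw [h3, abs_of_pos (by positivity)]
      have he : δ/(2*‖p₀‖)*‖p₀‖ = δ/2 := by field_simp
      rw [he]
      linarith
    have hQt : Qf (t • p₀) ≤ 1 := by
      have := hballδ htp₀
      rw [hKQ] at this; exact this
    have hscale : Qf (t • p₀) = t^2 * Qf p₀ := by
      simp only [hQfdef, PiLp.smul_apply, smul_eq_mul]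
      field_simp
    have hQpos : 0 < Qf p₀ := by
      simp only [hQfdef]
      have h4 : 0 < (p₀ 0)^2/a^2 := by rw [hp₀0]; positivity
      have h5 : 0 ≤ (p₀ 1)^2/b^2 := by positivity
      have h6 : 0 ≤ (p₀ 2)^2/c^2 := by positivity
      linarith
    nlinarith
  -- choose ε
  have hcx₀ : crv x₀ y₀ z₀ q r x₀ = p₀ := by
    rw [hp₀def]
    simp only [crv, div_self hx₀.ne', Real.one_rpow, mul_one]
  have hQccont : ContinuousAt (fun u => Qf (crv x₀ y₀ z₀ q r u)) x₀ :=
    hQcont.continuousAt.comp (crv_hasDerivAt hx₀ hx₀).continuousAt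
  have hval : Qf (crv x₀ y₀ z₀ q r x₀) < 1 := by rw [hcx₀]; exact hQp₀
  obtain ⟨δ', hδ', hδ'ball⟩ : ∃ δ' > 0, ∀ u, |u - x₀| < δ' → Qf (crv x₀ y₀ z₀ q r u) < 1 := by
    have hev := hQccont.preimage_mem_nhds (IsOpen.mem_nhds isOpen_Iio hval)
    rw [Metric.mem_nhds_iff] at hev
    obtain ⟨δ', h1, h2⟩ := hev
    exact ⟨δ', h1, fun u hu => h2 (by simpa [Real.dist_eq] using hu)⟩
  refine ⟨δ'/2, by positivity, ?_⟩
  set ε : ℝ := δ'/2 with hεdef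
  set X : ℝ := x₀ + ε with hXdef
  have hXpos : 0 < X := by positivity
  have hx₀X : x₀ < X := by simp only [hXdef]; linarith
  have hQX : Qf (crv x₀ y₀ z₀ q r X) < 1 := by
    apply hδ'ball
    rw [hXdef]
    rw [show x₀ + ε - x₀ = ε by ring, abs_of_pos (by positivity)]
    rw [hεdef]; linarith
  -- monotonicity of Qf along the curve
  have hmono : ∀ x, 0 < x → x ≤ X → Qf (crv x₀ y₀ z₀ q r x) ≤ Qf (crv x₀ y₀ z₀ q r X) := by
    intro x hx hxX
    simp only [crv, hQfdef, vec3_apply0, vec3_apply1, vec3_apply2]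
    have hdiv : x/x₀ ≤ X/x₀ := by gcongr
    have hdnn : (0:ℝ) ≤ x/x₀ := by positivity
    have h1 : (x/x₀)^q ≤ (X/x₀)^q := Real.rpow_le_rpow hdnn hdiv hq.le
    have h2 : (x/x₀)^r ≤ (X/x₀)^r := Real.rpow_le_rpow hdnn hdiv hr.le
    have h1n : (0:ℝ) ≤ (x/x₀)^q := Real.rpow_nonneg hdnn q
    have h2n : (0:ℝ) ≤ (x/x₀)^r := Real.rpow_nonneg hdnn r
    have e1 : (y₀*(x/x₀)^q)^2 ≤ (y₀*(X/x₀)^q)^2 := by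
      calc (y₀*(x/x₀)^q)^2 = y₀^2 * ((x/x₀)^q*(x/x₀)^q) := by ring
        _ ≤ y₀^2 * ((X/x₀)^q*(X/x₀)^q) :=
            mul_le_mul_of_nonneg_left (mul_le_mul h1 h1 h1n (h1n.trans h1)) (sq_nonneg y₀)
        _ = (y₀*(X/x₀)^q)^2 := by ring
    have e2 : (z₀*(x/x₀)^r)^2 ≤ (z₀*(X/x₀)^r)^2 := by
      calc (z₀*(x/x₀)^r)^2 = z₀^2 * ((x/x₀)^r*(x/x₀)^r) := by ring
        _ ≤ z₀^2 * ((X/x₀)^r*(X/x₀)^r) :=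
            mul_le_mul_of_nonneg_left (mul_le_mul h2 h2 h2n (h2n.trans h2)) (sq_nonneg z₀)
        _ = (z₀*(X/x₀)^r)^2 := by ring
    have e0 : x^2 ≤ X^2 := by nlinarith
    exact add_le_add (add_le_add ((div_le_div_iff_of_pos_right (by positivity)).2 e0)
      ((div_le_div_iff_of_pos_right (by positivity)).2 e1)) ((div_le_div_iff_of_pos_right (by positivity)).2 e2)
  have hcrvlt : ∀ x, 0 < x → x < X → Qf (crv x₀ y₀ z₀ q r x) < 1 := fun x hx hxX =>
    lt_of_le_of_lt (hmono x hx hxX.le) hQX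
  -- boundedness of K
  have hKbdd : ∀ v ∈ K, ‖v‖ ≤ a + b + c := by
    intro v hv
    rw [hKQ] at hv
    simp only [mem_setOf_eq, hQfdef] at hv
    have h1 : (v 0)^2 ≤ a^2 := by
      have h5 : 0 ≤ (v 1)^2/b^2 := by positivity
      have h6 : 0 ≤ (v 2)^2/c^2 := by positivity
      have : (v 0)^2/a^2 ≤ 1 := by linarith
      calc (v 0)^2 = ((v 0)^2/a^2)*a^2 := by field_simp
        _ ≤ 1*a^2 := by nlinarith
        _ = a^2 := one_mul _
    have h2 : (v 1)^2 ≤ b^2 := by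
      have h5 : 0 ≤ (v 0)^2/a^2 := by positivity
      have h6 : 0 ≤ (v 2)^2/c^2 := by positivity
      have : (v 1)^2/b^2 ≤ 1 := by linarith
      calc (v 1)^2 = ((v 1)^2/b^2)*b^2 := by field_simp
        _ ≤ 1*b^2 := by nlinarith
        _ = b^2 := one_mul _
    have h3 : (v 2)^2 ≤ c^2 := by
      have h5 : 0 ≤ (v 0)^2/a^2 := by positivity
      have h6 : 0 ≤ (v 1)^2/b^2 := by positivity
      have : (v 2)^2/c^2 ≤ 1 := by linarith
      calc (v 2)^2 = ((v 2)^2/c^2)*c^2 := by field_simp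
        _ ≤ 1*c^2 := by nlinarith
        _ = c^2 := one_mul _
    have ha1 : |v 0| ≤ a := by nlinarith [sq_abs (v 0), abs_nonneg (v 0)]
    have hb1 : |v 1| ≤ b := by nlinarith [sq_abs (v 1), abs_nonneg (v 1)]
    have hc1 : |v 2| ≤ c := by nlinarith [sq_abs (v 2), abs_nonneg (v 2)]
    calc ‖v‖ ≤ |v 0| + |v 1| + |v 2| := norm_E3_le v
      _ ≤ a + b + c := by linarith
  -- the speed function
  set g : ℝ → ℝ := fun x => ‖crv' x₀ y₀ z₀ q r x‖ with hgdef
  have hgcont : ContinuousOn g (Ioi 0) := (crv'_continuousOn hx₀).norm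
  have hg1 : ∀ x, 0 < x → 1 ≤ g x := by
    intro x hx
    calc (1:ℝ) = |crv' x₀ y₀ z₀ q r x 0| := by simp [crv']
      _ ≤ ‖crv' x₀ y₀ z₀ q r x‖ := abs_coord_le_norm _ _
  have hgpos : ∀ x, 0 < x → 0 < g x := fun x hx => lt_of_lt_of_le one_pos (hg1 x hx)
  have hgint : ∀ u v : ℝ, 0 < u → 0 < v → IntervalIntegrable g volume u v := by
    intro u v hu hv
    apply ContinuousOn.intervalIntegrable
    apply hgcont.mono
    intro t ht
    have h1 : min u v ≤ t := ht.1
    have h2 : 0 < min u v := lt_min hu hv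
    exact lt_of_lt_of_le h2 h1
  set L : ℝ → ℝ := fun x => ∫ t in x₀..x, g t with hLdef
  have hLderiv : ∀ x, 0 < x → HasDerivAt L (g x) x := by
    intro x hx
    exact intervalIntegral.integral_hasDerivAt_right (hgint x₀ x hx₀ hx)
      ((hgcont.stronglyMeasurableAtFilter isOpen_Ioi) x hx)
      (hgcont.continuousAt (Ioi_mem_nhds hx))
  have hLdiff : ∀ u v : ℝ, 0 < u → 0 < v → L v - L u = ∫ t in u..v, g t := by
    intro u v hu hv
    rw [hLdef]
    simp only
    rw [← intervalIntegral.integral_interval_sub_left (hgint x₀ v hx₀ hv) (hgint x₀ u hx₀ hu)]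
  have hLmono : StrictMonoOn L (Ioi 0) := by
    intro u hu v hv huv
    have h1 : (v - u : ℝ) ≤ ∫ t in u..v, g t := by
      have h2 : ∫ t in u..v, (1:ℝ) = v - u := by simp
      rw [← h2]
      apply intervalIntegral.integral_mono_on huv.le intervalIntegrable_const
        (hgint u v hu hv)
      intro t ht
      exact hg1 t (lt_of_lt_of_le hu ht.1)
    have h3 := hLdiff u v hu hv
    have : 0 < v - u := by linarith [mem_Ioi.1 hu]
    linarith
  -- integrable upper bound for g near 0
  set C1 : ℝ := |y₀| * q * (1/x₀) with hC1def
  set C2 : ℝ := |z₀| * r * (1/x₀) with hC2def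
  set Gb : ℝ → ℝ := fun t => 1 + C1 * (t*x₀⁻¹)^(q-1) + C2 * (t*x₀⁻¹)^(r-1) with hGbdef
  have hC1nn : 0 ≤ C1 := by positivity
  have hC2nn : 0 ≤ C2 := by positivity
  have hGbnn : ∀ t : ℝ, 0 ≤ t → 0 ≤ Gb t := by
    intro t ht
    have h1 : (0:ℝ) ≤ (t*x₀⁻¹)^(q-1) := Real.rpow_nonneg (by positivity) _
    have h2 : (0:ℝ) ≤ (t*x₀⁻¹)^(r-1) := Real.rpow_nonneg (by positivity) _
    simp only [hGbdef]
    have := mul_nonneg hC1nn h1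
    have := mul_nonneg hC2nn h2
    linarith
  have hgle : ∀ t : ℝ, 0 < t → g t ≤ Gb t := by
    intro t ht
    have hbase : (0:ℝ) ≤ t/x₀ := by positivity
    have h1 : (0:ℝ) ≤ (t/x₀)^(q-1) := Real.rpow_nonneg hbase _
    have h2 : (0:ℝ) ≤ (t/x₀)^(r-1) := Real.rpow_nonneg hbase _
    have hnorm := norm_E3_le (crv' x₀ y₀ z₀ q r t)
    simp only [crv', vec3_apply0, vec3_apply1, vec3_apply2] at hnorm
    have ha1 : |y₀ * (q * (t/x₀)^(q-1) * (1/x₀))| = |y₀| * (q * (t/x₀)^(q-1) * (1/x₀)) := by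
      rw [abs_mul, abs_of_nonneg (mul_nonneg (mul_nonneg hq.le h1) (by positivity))]
    have ha2 : |z₀ * (r * (t/x₀)^(r-1) * (1/x₀))| = |z₀| * (r * (t/x₀)^(r-1) * (1/x₀)) := by
      rw [abs_mul, abs_of_nonneg (mul_nonneg (mul_nonneg hr.le h2) (by positivity))]
    have hdm : t/x₀ = t*x₀⁻¹ := div_eq_mul_inv t x₀
    calc g t ≤ |1| + |y₀ * (q * (t/x₀)^(q-1) * (1/x₀))| + |z₀ * (r * (t/x₀)^(r-1) * (1/x₀))| :=
          hnorm
      _ = 1 + C1 * (t*x₀⁻¹)^(q-1) + C2 * (t*x₀⁻¹)^(r-1) := by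
          rw [ha1, ha2, abs_one, hC1def, hC2def, ← hdm]; ring
      _ = Gb t := rfl
  have hGbint : ∀ u v : ℝ, 0 ≤ u → 0 ≤ v → IntervalIntegrable Gb volume u v := by
    intro u v hu hv
    apply IntervalIntegrable.add
    apply IntervalIntegrable.add
    · exact intervalIntegrable_const
    · apply IntervalIntegrable.const_mul
      have h1 : IntervalIntegrable (fun s : ℝ => s^(q-1)) volume (u*x₀⁻¹) (v*x₀⁻¹) :=
        intervalIntegral.intervalIntegrable_rpow' (by linarith)
      have h2 := h1.comp_mul_right (c := x₀⁻¹)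
      rwa [show u*x₀⁻¹/x₀⁻¹ = u by field_simp, show v*x₀⁻¹/x₀⁻¹ = v by field_simp] at h2
    · apply IntervalIntegrable.const_mul
      have h1 : IntervalIntegrable (fun s : ℝ => s^(r-1)) volume (u*x₀⁻¹) (v*x₀⁻¹) :=
        intervalIntegral.intervalIntegrable_rpow' (by linarith)
      have h2 := h1.comp_mul_right (c := x₀⁻¹)
      rwa [show u*x₀⁻¹/x₀⁻¹ = u by field_simp, show v*x₀⁻¹/x₀⁻¹ = v by field_simp] at h2
  set M : ℝ := ∫ t in (0:ℝ)..X, Gb t with hMdef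
  have hMsub : ∀ u v : ℝ, 0 < u → u ≤ v → v ≤ X → ∫ t in u..v, g t ≤ M := by
    intro u v hu huv hvX
    have huvpos : 0 < v := lt_of_lt_of_le hu huv
    have h1 : ∫ t in u..v, g t ≤ ∫ t in u..v, Gb t := by
      apply intervalIntegral.integral_mono_on huv (hgint u v hu huvpos)
        (hGbint u v hu.le huvpos.le)
      intro t ht
      exact hgle t (lt_of_lt_of_le hu ht.1)
    have h2 : ∫ t in u..v, Gb t ≤ M := by
      rw [hMdef]
      have hs1 : (∫ t in (0:ℝ)..u, Gb t) + ∫ t in u..v, Gb t = ∫ t in (0:ℝ)..v, Gb t :=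
        intervalIntegral.integral_add_adjacent_intervals (hGbint 0 u le_rfl hu.le)
          (hGbint u v hu.le huvpos.le)
      have hs2 : (∫ t in (0:ℝ)..v, Gb t) + ∫ t in v..X, Gb t = ∫ t in (0:ℝ)..X, Gb t :=
        intervalIntegral.integral_add_adjacent_intervals (hGbint 0 v le_rfl huvpos.le)
          (hGbint v X huvpos.le hXpos.le)
      have hn1 : 0 ≤ ∫ t in (0:ℝ)..u, Gb t := by
        apply intervalIntegral.integral_nonneg hu.le
        intro t ht; exact hGbnn t ht.1
      have hn2 : 0 ≤ ∫ t in v..X, Gb t := by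
        apply intervalIntegral.integral_nonneg hvX
        intro t ht; exact hGbnn t (le_trans huvpos.le ht.1)
      linarith
    linarith
  have hLbound : ∀ x, 0 < x → x ≤ X → |L x| ≤ M := by
    intro x hx hxX
    rcases le_total x₀ x with hcase | hcase
    · have h1 : L x - L x₀ = ∫ t in x₀..x, g t := hLdiff x₀ x hx₀ hx
      have h2 : L x₀ = 0 := by simp [hLdef]
      have h3 : 0 ≤ ∫ t in x₀..x, g t := by
        apply intervalIntegral.integral_nonneg hcase
        intro t ht
        linarith [hg1 t (lt_of_lt_of_le hx₀ ht.1)]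
      have h4 := hMsub x₀ x hx₀ hcase hxX
      rw [abs_of_nonneg (by linarith)]
      linarith
    · have h1 : L x₀ - L x = ∫ t in x..x₀, g t := hLdiff x x₀ hx hx₀
      have h2 : L x₀ = 0 := by simp [hLdef]
      have h3 : 0 ≤ ∫ t in x..x₀, g t := by
        apply intervalIntegral.integral_nonneg hcase
        intro t ht
        linarith [hg1 t (lt_of_lt_of_le hx ht.1)]
      have h4 := hMsub x x₀ hx hcase (by linarith)
      rw [abs_of_nonpos (by linarith)]
      linarith
  -- the image interval
  set D : Set ℝ := Ioo 0 X with hDdef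
  have hx₀D : x₀ ∈ D := ⟨hx₀, hx₀X⟩
  set S : Set ℝ := L '' D with hSdef
  have hSne : S.Nonempty := ⟨L x₀, x₀, hx₀D, rfl⟩
  have hSbdd : ∀ y ∈ S, |y| ≤ M := by rintro y ⟨x, hx, rfl⟩; exact hLbound x hx.1 hx.2.le
  have hbddA : BddAbove S := ⟨M, fun y hy => le_of_abs_le (hSbdd y hy)⟩
  have hbddB : BddBelow S := ⟨-M, fun y hy => neg_le_of_abs_le (hSbdd y hy)⟩
  set α : ℝ := sInf S with hαdef
  set β : ℝ := sSup S with hβdef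
  have hLcont : ContinuousOn L (Ioi 0) := fun x hx =>
    ((hLderiv x hx).continuousAt).continuousWithinAt
  have hSIoo : S = Ioo α β := by
    apply Subset.antisymm
    · rintro y ⟨x, hxD, rfl⟩
      constructor
      · have h1 : L (x/2) ∈ S := ⟨x/2, ⟨by linarith [hxD.1], by linarith [hxD.1, hxD.2]⟩, rfl⟩
        have h2 : L (x/2) < L x := hLmono (by simpa using by linarith [hxD.1] : x/2 ∈ Ioi (0:ℝ))
          (mem_Ioi.2 hxD.1) (by linarith [hxD.1])
        exact lt_of_le_of_lt (csInf_le hbddB h1) h2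
      · have h1 : L ((x+X)/2) ∈ S :=
          ⟨(x+X)/2, ⟨by linarith [hxD.1, hXpos], by linarith [hxD.2]⟩, rfl⟩
        have h2 : L x < L ((x+X)/2) := hLmono (mem_Ioi.2 hxD.1)
          (mem_Ioi.2 (by linarith [hxD.1, hXpos])) (by linarith [hxD.2])
        exact lt_of_lt_of_le h2 (le_csSup hbddA h1)
    · rintro y ⟨hy1, hy2⟩
      obtain ⟨s1, hs1S, hs1⟩ := exists_lt_of_csInf_lt hSne hy1
      obtain ⟨s2, hs2S, hs2⟩ := exists_lt_of_lt_csSup hSne hy2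
      obtain ⟨u1, hu1D, rfl⟩ := hs1S
      obtain ⟨u2, hu2D, rfl⟩ := hs2S
      have hL12 : L u1 < L u2 := lt_trans hs1 hs2
      have hu12 : u1 < u2 := by
        by_contra h
        push_neg at h
        rcases eq_or_lt_of_le h with h' | h'
        · rw [h'] at hL12; exact lt_irrefl _ hL12
        · exact absurd (hLmono (mem_Ioi.2 hu2D.1) (mem_Ioi.2 hu1D.1) h') (by linarith)
      have hIcc : Icc u1 u2 ⊆ Ioi (0:ℝ) := fun t ht => lt_of_lt_of_le hu1D.1 ht.1
      obtain ⟨x, hxmem, hxy⟩ := intermediate_value_Icc hu12.le (hLcont.mono hIcc)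
        ⟨hs1.le, hs2.le⟩
      exact ⟨x, ⟨lt_of_lt_of_le hu1D.1 hxmem.1, lt_of_le_of_lt hxmem.2 hu2D.2⟩, hxy⟩
  have hαβ : α < β := by
    obtain ⟨y, hy⟩ := hSne
    rw [hSIoo] at hy
    exact lt_trans hy.1 hy.2
  -- inverse function
  set τ : ℝ → ℝ := Function.invFunOn L D with hτdef
  have hinj : Set.InjOn L D := (hLmono.injOn).mono (fun t ht => ht.1)
  have hτL : ∀ x ∈ D, τ (L x) = x := fun x hx => hinj.leftInvOn_invFunOn hx
  have hτmem : ∀ y ∈ S, τ y ∈ D := by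
    rintro y ⟨x, hx, rfl⟩
    exact Function.invFunOn_mem ⟨x, hx, rfl⟩
  have hLτ : ∀ y ∈ S, L (τ y) = y := by
    rintro y ⟨x, hx, rfl⟩
    rw [hτL x hx]
  have hτcont : ∀ y ∈ Ioo α β, ContinuousAt τ y := by
    intro y hy
    have hyS : y ∈ S := by rw [hSIoo]; exact hy
    have hxD : τ y ∈ D := hτmem y hyS
    have hLx : L (τ y) = y := hLτ y hyS
    rw [Metric.continuousAt_iff]
    intro ε' hε'
    set x : ℝ := τ y
    set u1 : ℝ := max (x/2) (x - ε'/2) with hu1def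
    set u2 : ℝ := min ((x+X)/2) (x + ε'/2) with hu2def
    have hu1x : u1 < x := max_lt (by linarith [hxD.1]) (by linarith)
    have hxu2 : x < u2 := lt_min (by linarith [hxD.2]) (by linarith)
    have hu1pos : 0 < u1 := lt_of_lt_of_le (by linarith [hxD.1] : (0:ℝ) < x/2) (le_max_left _ _)
    have hu1D : u1 ∈ D := ⟨hu1pos, lt_trans hu1x hxD.2⟩
    have hu2D : u2 ∈ D := ⟨lt_trans hxD.1 hxu2,
      lt_of_le_of_lt (min_le_left _ _) (by linarith [hxD.2])⟩
    have hL1 : L u1 < y := by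
      have h := hLmono (mem_Ioi.2 hu1pos) (mem_Ioi.2 hxD.1) hu1x
      rwa [hLx] at h
    have hL2 : y < L u2 := by
      have h := hLmono (mem_Ioi.2 hxD.1) (mem_Ioi.2 hu2D.1) hxu2
      rwa [hLx] at h
    refine ⟨min (y - L u1) (L u2 - y), lt_min (by linarith) (by linarith), ?_⟩
    intro z hz
    rw [Real.dist_eq] at hz
    have habs := abs_lt.1 hz
    have hz1 : L u1 < z := by
      have := min_le_left (y - L u1) (L u2 - y); linarith [habs.1]
    have hz2 : z < L u2 := by
      have := min_le_right (y - L u1) (L u2 - y); linarith [habs.2]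
    have hzS : z ∈ S := by
      rw [hSIoo]
      have hm1 : L u1 ∈ Ioo α β := by rw [← hSIoo]; exact ⟨u1, hu1D, rfl⟩
      have hm2 : L u2 ∈ Ioo α β := by rw [← hSIoo]; exact ⟨u2, hu2D, rfl⟩
      exact ⟨lt_trans hm1.1 hz1, lt_trans hz2 hm2.2⟩
    have hτzD : τ z ∈ D := hτmem z hzS
    have hLτz : L (τ z) = z := hLτ z hzS
    have h5 : u1 < τ z := by
      by_contra h
      push_neg at h
      rcases eq_or_lt_of_le h with h' | h'
      · rw [h'] at hLτz; linarith
      · have := hLmono (mem_Ioi.2 hτzD.1) (mem_Ioi.2 hu1pos) h'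
        linarith
    have h6 : τ z < u2 := by
      by_contra h
      push_neg at h
      rcases eq_or_lt_of_le h with h' | h'
      · rw [← h'] at hLτz; linarith
      · have := hLmono (mem_Ioi.2 hu2D.1) (mem_Ioi.2 hτzD.1) h'
        linarith
    rw [Real.dist_eq, abs_lt]
    have hb1 : x - ε'/2 ≤ u1 := le_max_right _ _
    have hb2 : u2 ≤ x + ε'/2 := min_le_right _ _
    exact ⟨by linarith, by linarith⟩
  have hτderiv : ∀ y ∈ Ioo α β, HasDerivAt τ (g (τ y))⁻¹ y := by
    intro y hy
    have hyS : y ∈ S := by rw [hSIoo]; exact hy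
    have hxD := hτmem y hyS
    have hfg : ∀ᶠ z in 𝓝 y, L (τ z) = z := by
      apply Filter.eventually_of_mem (Ioo_mem_nhds hy.1 hy.2)
      intro z hz
      exact hLτ z (by rw [hSIoo]; exact hz)
    exact HasDerivAt.of_local_left_inverse (hτcont y hy) (hLderiv (τ y) hxD.1)
      (ne_of_gt (hgpos _ hxD.1)) hfg
  -- the curve
  set γ : ℝ → E3 := fun s => crv x₀ y₀ z₀ q r (τ s) with hγdef
  have hγderiv : ∀ s ∈ Ioo α β, HasDerivAt γ ((g (τ s))⁻¹ • crv' x₀ y₀ z₀ q r (τ s)) s := by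
    intro s hs
    have hxD := hτmem s (by rw [hSIoo]; exact hs)
    exact (crv_hasDerivAt hx₀ hxD.1).scomp s (hτderiv s hs)
  have hderiveq : ∀ s ∈ Ioo α β, deriv γ s = (g (τ s))⁻¹ • crv' x₀ y₀ z₀ q r (τ s) :=
    fun s hs => (hγderiv s hs).deriv
  have hunit : ∀ s ∈ Ioo α β, ‖deriv γ s‖ = 1 := by
    intro s hs
    have hxD := hτmem s (by rw [hSIoo]; exact hs)
    rw [hderiveq s hs, norm_smul, Real.norm_eq_abs, abs_inv, abs_of_pos (hgpos _ hxD.1)]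
    exact inv_mul_cancel₀ (ne_of_gt (hgpos _ hxD.1))
  have hτcontOn : ContinuousOn τ (Ioo α β) := fun y hy => (hτcont y hy).continuousWithinAt
  have hτmaps : MapsTo τ (Ioo α β) (Ioi 0) := fun y hy => (hτmem y (by rw [hSIoo]; exact hy)).1
  refine ⟨α, β, γ, hαβ, ?_, hunit, ?_, ?_, ?_⟩
  · -- C¹
    rw [show (1 : WithTop ℕ∞) = 0 + 1 from (zero_add 1).symm,
      contDiffOn_succ_iff_deriv_of_isOpen isOpen_Ioo]
    refine ⟨fun s hs => ((hγderiv s hs).differentiableAt).differentiableWithinAt,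
      fun h => by simp at h, ?_⟩
    rw [contDiffOn_zero]
    apply ContinuousOn.congr (f := fun s => (g (τ s))⁻¹ • crv' x₀ y₀ z₀ q r (τ s))
    · apply ContinuousOn.fun_smul
      · exact ((hgcont.comp hτcontOn hτmaps).inv₀
          (fun y hy => ne_of_gt (hgpos _ (hτmaps hy))))
      · exact (crv'_continuousOn hx₀).comp hτcontOn hτmaps
    · intro s hs
      exact hderiveq s hs
  · -- image
    have himage : γ '' Ioo α β = crv x₀ y₀ z₀ q r '' D := by
      apply Subset.antisymm
      · rintro _ ⟨s, hs, rfl⟩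
        exact ⟨τ s, hτmem s (by rw [hSIoo]; exact hs), rfl⟩
      · rintro _ ⟨x, hx, rfl⟩
        refine ⟨L x, by rw [← hSIoo]; exact ⟨x, hx, rfl⟩, ?_⟩
        simp only [hγdef]
        rw [hτL x hx]
    rw [himage]
    ext v
    simp only [mem_image, mem_setOf_eq]
    constructor
    · rintro ⟨x, hx, rfl⟩
      exact ⟨x, hx, rfl⟩
    · rintro ⟨x, hx, h⟩
      exact ⟨x, hx, h.symm⟩
  · -- passes through p₀
    refine ⟨L x₀, by rw [← hSIoo]; exact ⟨x₀, hx₀D, rfl⟩, ?_⟩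
    simp only [hγdef]
    rw [hτL x₀ hx₀D, hcx₀]
  · -- centroid property
    intro s hs
    have hsS : s ∈ S := by rw [hSIoo]; exact hs
    have hxD : τ s ∈ D := hτmem s hsS
    set x : ℝ := τ s with hxdef
    have hxpos : 0 < x := hxD.1
    have hgx : 0 < g x := hgpos x hxpos
    set m : E3 := γ s with hmdef
    set n : E3 := deriv γ s with hndef
    have hmcrv : m = crv x₀ y₀ z₀ q r x := rfl
    have hneq : n = (g x)⁻¹ • crv' x₀ y₀ z₀ q r x := hderiveq s hs
    have hn0 : n ≠ 0 := by
      intro h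
      have h1 := hunit s hs
      rw [← hndef, h, norm_zero] at h1
      norm_num at h1
    have hm0 : m 0 = x := by rw [hmcrv]; simp [crv]
    have hm1 : m 1 = y₀ * (x/x₀)^q := by rw [hmcrv]; simp [crv]
    have hm2 : m 2 = z₀ * (x/x₀)^r := by rw [hmcrv]; simp [crv]
    have hx0' : x ≠ 0 := ne_of_gt hxpos
    have hxx₀ : x/x₀ ≠ 0 := ne_of_gt (div_pos hxpos hx₀)
    have hkey : ∀ w : E3, ⟪w, n⟫ = 0 →
        w 0 * m 0 / a^2 + w 1 * m 1 / b^2 + w 2 * m 2 / c^2 = 0 := by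
      intro w hw
      rw [hneq, real_inner_smul_right] at hw
      have hw2 : ⟪w, crv' x₀ y₀ z₀ q r x⟫ = 0 :=
        (mul_eq_zero.1 hw).resolve_left (inv_ne_zero (ne_of_gt hgx))
      rw [inner_E3] at hw2
      simp only [crv', vec3_apply0, vec3_apply1, vec3_apply2] at hw2
      have e2 : y₀ * (q * (x/x₀)^(q-1) * (1/x₀)) = y₀ * (x/x₀)^q * q / x := by
        rw [Real.rpow_sub_one hxx₀]
        field_simp
      have e3 : z₀ * (r * (x/x₀)^(r-1) * (1/x₀)) = z₀ * (x/x₀)^r * r / x := by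
        rw [Real.rpow_sub_one hxx₀]
        field_simp
      rw [e2, e3] at hw2
      rw [hm0, hm1, hm2]
      have hT : w 0 * x/a^2 + w 1 * (y₀*(x/x₀)^q)/b^2 + w 2 * (z₀*(x/x₀)^r)/c^2
          = (x/a^2) * (w 0 * 1 + w 1 * (y₀ * (x/x₀)^q * q / x)
            + w 2 * (z₀ * (x/x₀)^r * r / x)) := by
        rw [hqdef, hrdef]
        field_simp
      rw [hT, hw2, mul_zero]
    have hsymmK : ∀ v ∈ K ∩ {x' : E3 | ⟪x' - m, n⟫ = 0},
        (2:ℝ) • m - v ∈ K ∩ {x' : E3 | ⟪x' - m, n⟫ = 0} := by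
      rintro v ⟨hvK, hvH⟩
      have hvH' : ⟪v - m, n⟫ = 0 := hvH
      have hB := hkey (v - m) hvH'
      simp only [PiLp.sub_apply] at hB
      constructor
      · rw [hKQ] at hvK ⊢
        simp only [mem_setOf_eq, hQfdef] at hvK ⊢
        have hc0 : ((2:ℝ) • m - v) 0 = 2 * m 0 - v 0 := by
          simp [PiLp.sub_apply, PiLp.smul_apply, smul_eq_mul]
        have hc1 : ((2:ℝ) • m - v) 1 = 2 * m 1 - v 1 := by
          simp [PiLp.sub_apply, PiLp.smul_apply, smul_eq_mul]
        have hc2 : ((2:ℝ) • m - v) 2 = 2 * m 2 - v 2 := by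
          simp [PiLp.sub_apply, PiLp.smul_apply, smul_eq_mul]
        rw [hc0, hc1, hc2]
        have hexp : (2*m 0 - v 0)^2/a^2 + (2*m 1 - v 1)^2/b^2 + (2*m 2 - v 2)^2/c^2
            = (v 0)^2/a^2 + (v 1)^2/b^2 + (v 2)^2/c^2
              - 4*((v 0 - m 0) * m 0 / a^2 + (v 1 - m 1) * m 1 / b^2
                + (v 2 - m 2) * m 2 / c^2) := by
          ring
        rw [hexp, hB]
        linarith
      · show ⟪((2:ℝ) • m - v) - m, n⟫ = 0
        have hrw : ((2:ℝ) • m - v) - m = -(v - m) := by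
          rw [two_smul]; abel
        rw [hrw, inner_neg_left, hvH', neg_zero]
    have hQm : Qf m < 1 := by rw [hmcrv]; exact hcrvlt x hxpos hxD.2
    obtain ⟨ρ, hρ, hρball⟩ : ∃ ρ > 0, Metric.closedBall m ρ ⊆ K := by
      have hU : IsOpen {v : E3 | Qf v < 1} := isOpen_lt hQcont continuous_const
      obtain ⟨ρ', hρ', hb'⟩ := Metric.isOpen_iff.1 hU m hQm
      refine ⟨ρ'/2, by linarith, ?_⟩
      intro v hv
      have h1 : v ∈ Metric.ball m ρ' :=
        Metric.mem_ball.2 (lt_of_le_of_lt (Metric.mem_closedBall.1 hv) (by linarith))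
      have h2 := hb' h1
      rw [hKQ]
      simp only [mem_setOf_eq] at h2 ⊢
      exact le_of_lt h2
    have hsec := section_pos_fin K m n hn0 ρ (a+b+c) hρ hρball hKbdd
    have hmeasS : MeasurableSet (K ∩ {x' : E3 | ⟪x' - m, n⟫ = 0}) := by
      apply MeasurableSet.inter
      · rw [hKQ]
        exact (isClosed_le hQcont continuous_const).measurableSet
      · exact (isClosed_eq (Continuous.inner (continuous_id.sub continuous_const)
          continuous_const) continuous_const).measurableSet
    have hbddS : ∀ v ∈ K ∩ {x' : E3 | ⟪x' - m, n⟫ = 0}, ‖v‖ ≤ a+b+c :=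
      fun v hv => hKbdd v hv.1
    exact centroid_of_symm _ hmeasS m hsymmK hsec.1 hsec.2 (a+b+c) hbddS
end
end

section
/- Let a, b, c > 0, let K = {(x,y,z) : x²/a² + y²/b² + z²/c² ≤ 1}, and let 0 < r < 1. Then every plane H that supports the homothetic ellipsoid r·K (i.e., H is tangent to r·K and r·K lies in one of the closed half-spaces bounded by H) cuts off from K a segment of volume exactly abc·(π/3)·(1−r)²·(2+r); consequently the floating bodies of the ellipsoid K are the homothetic ellipsoids r·K. -/
open MeasureTheory Set
open scoped RealInnerProductSpace Pointwise

noncomputable section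

lemma inner3 (x y : E3) : ⟪x, y⟫ = x 0 * y 0 + x 1 * y 1 + x 2 * y 2 := by
  simp [PiLp.inner_apply, RCLike.inner_apply, conj_trivial, Fin.sum_univ_three]; ring

lemma norm3 (x : E3) : ‖x‖ = Real.sqrt (x 0 ^ 2 + x 1 ^ 2 + x 2 ^ 2) := by
  simp [EuclideanSpace.norm_eq, Fin.sum_univ_three, sq_abs]

lemma norm3_le_one (x : E3) : ‖x‖ ≤ 1 ↔ x 0 ^ 2 + x 1 ^ 2 + x 2 ^ 2 ≤ 1 := by
  rw [norm3, show (1:ℝ) = Real.sqrt 1 by simp, Real.sqrt_le_sqrt_iff zero_le_one, Real.sqrt_one]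

lemma disk_ball (ρ : ℝ) (hρ : 0 ≤ ρ) :
    volume (Metric.closedBall (0 : EuclideanSpace ℝ (Fin 2)) ρ) = ENNReal.ofReal (Real.pi * ρ^2) := by
  rw [EuclideanSpace.volume_closedBall]
  simp only [Fintype.card_fin, Real.sq_sqrt Real.pi_pos.le]
  rw [show ((2:ℕ):ℝ)/2 + 1 = 2 by norm_num, Real.Gamma_two, div_one,
    ← ENNReal.ofReal_pow hρ, ← ENNReal.ofReal_mul (by positivity), mul_comm]

lemma disk_vol (ρ : ℝ) : volume {w : Fin 2 → ℝ | w 0 ^2 + w 1 ^2 ≤ ρ} = ENNReal.ofReal (Real.pi * ρ) := by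
  rcases lt_or_ge ρ 0 with hρ | hρ
  · have h0 : {w : Fin 2 → ℝ | w 0 ^2 + w 1 ^2 ≤ ρ} = ∅ := by
      ext w; simp only [mem_setOf_eq, mem_empty_iff_false, iff_false, not_le]
      nlinarith [sq_nonneg (w 0), sq_nonneg (w 1)]
    rw [h0, measure_empty]
    symm; exact ENNReal.ofReal_eq_zero.2 (by nlinarith [Real.pi_pos])
  · have key : {w : Fin 2 → ℝ | w 0^2 + w 1^2 ≤ ρ} =
        (MeasurableEquiv.toLp 2 (Fin 2 → ℝ)) ⁻¹' (Metric.closedBall 0 (Real.sqrt ρ)) := by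
      ext w
      simp only [mem_setOf_eq, mem_preimage, Metric.mem_closedBall, dist_zero_right,
        EuclideanSpace.norm_eq, MeasurableEquiv.toLp_apply,
        PiLp.toLp_apply, Real.norm_eq_abs, sq_abs,
        Fin.sum_univ_two]
      exact (Real.sqrt_le_sqrt_iff hρ).symm
    rw [key, (show MeasurePreserving (MeasurableEquiv.toLp 2 (Fin 2 → ℝ)) volume volume from
      (EuclideanSpace.volume_preserving_symm_measurableEquiv_toLp (Fin 2)).symm _).measure_preimage
      measurableSet_closedBall.nullMeasurableSet, disk_ball _ (Real.sqrt_nonneg _),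
      Real.sq_sqrt hρ]

lemma cap_pi (t : ℝ) (ht1 : -1 ≤ t) (ht2 : t ≤ 1) :
    volume {v : Fin 3 → ℝ | v 0^2 + v 1^2 + v 2^2 ≤ 1 ∧ t ≤ v 2}
      = ENNReal.ofReal (Real.pi/3 * (1-t)^2 * (2+t)) := by
  set e := MeasurableEquiv.piFinSuccAbove (fun _ : Fin 3 => ℝ) 2 with he
  set B : Set (ℝ × (Fin 2 → ℝ)) := {p | p.2 0^2 + p.2 1^2 + p.1^2 ≤ 1 ∧ t ≤ p.1} with hBdef
  have hB : MeasurableSet B := by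
    have hm1 : Measurable fun p : ℝ × (Fin 2 → ℝ) => p.2 0 ^ 2 + p.2 1 ^ 2 + p.1 ^ 2 :=
      ((((measurable_pi_apply 0).comp measurable_snd).pow_const 2).add
        (((measurable_pi_apply 1).comp measurable_snd).pow_const 2)).add
        (measurable_fst.pow_const 2)
    rw [hBdef, setOf_and]
    exact (measurableSet_le hm1 measurable_const).inter
      (measurableSet_le measurable_const measurable_fst)
  have hset : {v : Fin 3 → ℝ | v 0^2 + v 1^2 + v 2^2 ≤ 1 ∧ t ≤ v 2} = e ⁻¹' B := by
    ext v
    have h0 : Fin.removeNth 2 v 0 = v 0 := by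
      simp only [Fin.removeNth]; congr 1
    have h1 : Fin.removeNth 2 v 1 = v 1 := by
      simp only [Fin.removeNth]; congr 1
    simp only [he, mem_setOf_eq, mem_preimage, MeasurableEquiv.piFinSuccAbove_apply, hBdef,
      Fin.insertNthEquiv, Equiv.coe_fn_symm_mk, h0, h1]
    all_goals
      exact ⟨fun hp => ⟨by linarith [hp.1], hp.2⟩, fun hp => ⟨by linarith [hp.1], hp.2⟩⟩
  rw [hset, (volume_preserving_piFinSuccAbove (fun _ : Fin 3 => ℝ) 2).measure_preimage
    hB.nullMeasurableSet]
  rw [show (volume : Measure (ℝ × (Fin 2 → ℝ))) = (volume : Measure ℝ).prod volume from rfl,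
    Measure.prod_apply hB]
  have hslice : ∫⁻ s, (volume : Measure (Fin 2 → ℝ)) (Prod.mk s ⁻¹' B)
      = ∫⁻ s, (Ici t).indicator (fun s => ENNReal.ofReal (Real.pi * (1 - s^2))) s := by
    refine lintegral_congr fun s => ?_
    by_cases hs : t ≤ s
    · have : Prod.mk s ⁻¹' B = {w : Fin 2 → ℝ | w 0^2 + w 1^2 ≤ 1 - s^2} := by
        ext w; simp only [hBdef, mem_preimage, mem_setOf_eq]
        constructor
        · rintro ⟨h, _⟩; linarith
        · intro h; exact ⟨by linarith, hs⟩
      rw [this, disk_vol, indicator_of_mem (mem_Ici.2 hs)]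
    · have : Prod.mk s ⁻¹' B = ∅ := by
        ext w; simp only [hBdef, mem_preimage, mem_setOf_eq, mem_empty_iff_false, iff_false]
        rintro ⟨_, h⟩; exact hs h
      rw [this, measure_empty, indicator_of_notMem (by simpa using hs)]
  rw [hslice, lintegral_indicator measurableSet_Ici _,
    ← Icc_union_Ioi_eq_Ici ht2,
    lintegral_union measurableSet_Ioi
      (Set.disjoint_left.2 fun x hx hx' => absurd (mem_Ioi.1 hx') (not_lt.2 hx.2))]
  have hzero : ∫⁻ s in Ioi (1:ℝ), ENNReal.ofReal (Real.pi * (1 - s^2)) = 0 := by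
    rw [setLIntegral_congr_fun measurableSet_Ioi
      (fun s hs => ENNReal.ofReal_eq_zero.2
        (mul_nonpos_iff.2 (Or.inl ⟨Real.pi_pos.le, by nlinarith [mem_Ioi.1 hs]⟩)))]
    · simp
  have hmain : ∫⁻ s in Icc t 1, ENNReal.ofReal (Real.pi * (1 - s^2))
      = ENNReal.ofReal (Real.pi/3 * (1-t)^2 * (2+t)) := by
    rw [← ofReal_integral_eq_lintegral_ofReal]
    · congr 1
      rw [integral_Icc_eq_integral_Ioc, ← intervalIntegral.integral_of_le ht2,
        intervalIntegral.integral_const_mul,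
        intervalIntegral.integral_sub intervalIntegrable_const
          (intervalIntegral.intervalIntegrable_pow 2)]
      simp [integral_pow]
      ring
    · exact (continuous_const.mul ((continuous_const.sub (continuous_pow 2)))).integrableOn_Icc
    · refine (ae_restrict_iff' measurableSet_Icc).2 (ae_of_all _ fun s hs => ?_)
      have h1 := hs.1; have h2 := hs.2
      exact mul_nonneg Real.pi_pos.le (by nlinarith)
  rw [hmain, hzero, add_zero]

lemma cap_coord (t : ℝ) (ht1 : -1 ≤ t) (ht2 : t ≤ 1) :
    volume {v : E3 | ‖v‖ ≤ 1 ∧ t ≤ v 2} = ENNReal.ofReal (Real.pi/3 * (1-t)^2 * (2+t)) := by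
  have key : {v : E3 | ‖v‖ ≤ 1 ∧ t ≤ v 2} =
      (MeasurableEquiv.toLp 2 (Fin 3 → ℝ)).symm ⁻¹'
        {v : Fin 3 → ℝ | v 0^2 + v 1^2 + v 2^2 ≤ 1 ∧ t ≤ v 2} := by
    ext v
    simp only [mem_setOf_eq, mem_preimage, EuclideanSpace.norm_eq,
      MeasurableEquiv.toLp_symm_apply,
      Real.norm_eq_abs, sq_abs, Fin.sum_univ_three]
    rw [show (1:ℝ) = Real.sqrt 1 by simp]
    rw [Real.sqrt_le_sqrt_iff zero_le_one]
    simp [Real.sqrt_one]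
  have hA : MeasurableSet {v : Fin 3 → ℝ | v 0^2 + v 1^2 + v 2^2 ≤ 1 ∧ t ≤ v 2} := by
    have hm1 : Measurable fun v : Fin 3 → ℝ => v 0 ^ 2 + v 1 ^ 2 + v 2 ^ 2 :=
      (((measurable_pi_apply 0).pow_const 2).add
        ((measurable_pi_apply 1).pow_const 2)).add ((measurable_pi_apply 2).pow_const 2)
    rw [setOf_and]
    exact (measurableSet_le hm1 measurable_const).inter
      (measurableSet_le measurable_const (measurable_pi_apply 2))
  rw [key, (EuclideanSpace.volume_preserving_symm_measurableEquiv_toLp (Fin 3)).measure_preimage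
    hA.nullMeasurableSet, cap_pi t ht1 ht2]

lemma cap_unit (e : E3) (he : ‖e‖ = 1) (t : ℝ) (ht1 : -1 ≤ t) (ht2 : t ≤ 1) :
    volume {u : E3 | ‖u‖ ≤ 1 ∧ t ≤ ⟪u, e⟫} = ENNReal.ofReal (Real.pi/3 * (1-t)^2 * (2+t)) := by
  have hnorm1 : ‖(EuclideanSpace.single 2 1 : E3)‖ = 1 := by
    rw [EuclideanSpace.norm_single]; simp
  by_cases hee : e = EuclideanSpace.single 2 1
  · subst hee
    have : {u : E3 | ‖u‖ ≤ 1 ∧ t ≤ ⟪u, EuclideanSpace.single 2 1⟫} = {v : E3 | ‖v‖ ≤ 1 ∧ t ≤ v 2} := by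
      ext u; simp [EuclideanSpace.inner_single_right]
    rw [this]; exact cap_coord t ht1 ht2
  · set φ := Submodule.reflection (ℝ ∙ (e - EuclideanSpace.single 2 1))ᗮ with hφ
    have hφe : φ e = EuclideanSpace.single 2 1 := Submodule.reflection_sub (by rw [he, hnorm1])
    have hset : {u : E3 | ‖u‖ ≤ 1 ∧ t ≤ ⟪u, e⟫} = φ ⁻¹' {v : E3 | ‖v‖ ≤ 1 ∧ t ≤ v 2} := by
      ext u
      have h1 : ‖φ u‖ = ‖u‖ := φ.norm_map u
      have h2 : (φ u) 2 = ⟪u, e⟫ := by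
        have : ⟪φ u, φ e⟫ = ⟪u, e⟫ := φ.inner_map_map u e
        rw [hφe] at this
        rw [← this, EuclideanSpace.inner_single_right]; simp
      simp only [mem_setOf_eq, mem_preimage, h1, h2]
    have hclosed : MeasurableSet {v : E3 | ‖v‖ ≤ 1 ∧ t ≤ v 2} := by
      rw [setOf_and]
      refine ((isClosed_le continuous_norm continuous_const).inter
        (isClosed_le continuous_const ?_)).measurableSet
      exact (EuclideanSpace.proj (2 : Fin 3)).continuous
    rw [hset, (φ.measurePreserving).measure_preimage hclosed.nullMeasurableSet]
    exact cap_coord t ht1 ht2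

def diagMap (d : Fin 3 → ℝ) : E3 →ₗ[ℝ] E3 where
  toFun u := WithLp.toLp 2 (fun i => d i * u i)
  map_add' u v := by ext i; simp [mul_add]
  map_smul' c u := by ext i; simp [smul_eq_mul]; ring

lemma diagMap_det (d : Fin 3 → ℝ) : LinearMap.det (diagMap d) = d 0 * d 1 * d 2 := by
  have h : diagMap d = Matrix.toEuclideanLin (Matrix.diagonal d) := by
    apply LinearMap.ext; intro u
    ext i
    simp [diagMap, Matrix.toEuclideanLin, Matrix.mulVec_diagonal]
  rw [h, Matrix.toEuclideanLin_eq_toLin, LinearMap.det_toLin, Matrix.det_diagonal,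
    Fin.prod_univ_three]

lemma diagMap_apply (d : Fin 3 → ℝ) (u : E3) (i : Fin 3) : (diagMap d u) i = d i * u i := rfl

lemma norm_sq_one (n : E3) (hn : ‖n‖ = 1) : n 0 ^ 2 + n 1 ^ 2 + n 2 ^ 2 = 1 := by
  have h := congrArg (fun x : ℝ => x ^ 2) hn
  simp only [one_pow] at h
  rw [norm3, Real.sq_sqrt (by positivity)] at h
  exact h

lemma s_sq_pos (a b c : ℝ) (ha : 0 < a) (hb : 0 < b) (hc : 0 < c) (n : E3) (hn : ‖n‖ = 1) :
    0 < a^2*(n 0)^2 + b^2*(n 1)^2 + c^2*(n 2)^2 := by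
  have hone := norm_sq_one n hn
  have h0 : ∃ i : Fin 3, n i ≠ 0 := by
    by_contra h; push_neg at h
    rw [h 0, h 1, h 2] at hone; norm_num at hone
  have h1 : n 0 ≠ 0 ∨ n 1 ≠ 0 ∨ n 2 ≠ 0 := by
    obtain ⟨i, hi⟩ := h0
    fin_cases i
    exacts [Or.inl hi, Or.inr (Or.inl hi), Or.inr (Or.inr hi)]
  have key : ∀ x : ℝ, x ≠ 0 → 0 < x ^ 2 :=
    fun x hx => lt_of_le_of_ne (sq_nonneg x) (Ne.symm (pow_ne_zero 2 hx))
  rcases h1 with h | h | h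
  · nlinarith [mul_pos (pow_pos ha 2) (key _ h),
      mul_nonneg (sq_nonneg b) (sq_nonneg (n 1)), mul_nonneg (sq_nonneg c) (sq_nonneg (n 2))]
  · nlinarith [mul_pos (pow_pos hb 2) (key _ h),
      mul_nonneg (sq_nonneg a) (sq_nonneg (n 0)), mul_nonneg (sq_nonneg c) (sq_nonneg (n 2))]
  · nlinarith [mul_pos (pow_pos hc 2) (key _ h),
      mul_nonneg (sq_nonneg a) (sq_nonneg (n 0)), mul_nonneg (sq_nonneg b) (sq_nonneg (n 1))]

lemma engine (a b c : ℝ) (ha : 0 < a) (hb : 0 < b) (hc : 0 < c) (n : E3) (hn : ‖n‖ = 1)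
    (t : ℝ) (ht1 : -1 ≤ t) (ht2 : t ≤ 1) :
    volume ({x : E3 | x 0^2/a^2 + x 1^2/b^2 + x 2^2/c^2 ≤ 1} ∩
      {x : E3 | t * Real.sqrt (a^2*(n 0)^2 + b^2*(n 1)^2 + c^2*(n 2)^2) ≤ ⟪x, n⟫})
      = ENNReal.ofReal (a*b*c*(Real.pi/3)*(1-t)^2*(2+t)) := by
  set q : ℝ := a^2*(n 0)^2 + b^2*(n 1)^2 + c^2*(n 2)^2 with hqdef
  have hq : 0 < q := s_sq_pos a b c ha hb hc n hn
  set s : ℝ := Real.sqrt q with hsdef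
  have hs : 0 < s := Real.sqrt_pos.2 hq
  set d : Fin 3 → ℝ := ![a, b, c] with hddef
  have hd0 : d 0 = a := rfl
  have hd1 : d 1 = b := rfl
  have hd2 : d 2 = c := rfl
  set m : E3 := WithLp.toLp 2 (fun i => d i * n i : Fin 3 → ℝ) with hmdef
  have hm : ∀ i, m i = d i * n i := fun i => rfl
  have hnm : ‖m‖ = s := by
    rw [norm3, hsdef]; congr 1
    rw [hm 0, hm 1, hm 2, hd0, hd1, hd2]; ring
  set e : E3 := s⁻¹ • m with hedef
  have he : ‖e‖ = 1 := by
    rw [hedef, norm_smul, hnm, Real.norm_eq_abs, abs_inv, abs_of_pos hs, inv_mul_cancel₀ hs.ne']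
  have hinner_e : ∀ u : E3, ⟪u, e⟫ = s⁻¹ * ⟪u, m⟫ := fun u => real_inner_smul_right u m s⁻¹
  have hset : {x : E3 | x 0^2/a^2 + x 1^2/b^2 + x 2^2/c^2 ≤ 1} ∩
      {x : E3 | t * s ≤ ⟪x, n⟫} = diagMap d '' {u : E3 | ‖u‖ ≤ 1 ∧ t ≤ ⟪u, e⟫} := by
    ext x
    constructor
    · rintro ⟨h1, h2⟩
      refine ⟨WithLp.toLp 2 (fun i => x i / d i : Fin 3 → ℝ), ⟨?_, ?_⟩, ?_⟩
      · rw [norm3_le_one]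
        show (x 0 / d 0)^2 + (x 1 / d 1)^2 + (x 2 / d 2)^2 ≤ 1
        rw [hd0, hd1, hd2, div_pow, div_pow, div_pow]
        exact h1
      · rw [hinner_e, inner3]
        show t ≤ s⁻¹ * (x 0 / d 0 * m 0 + x 1 / d 1 * m 1 + x 2 / d 2 * m 2)
        rw [hm 0, hm 1, hm 2, hd0, hd1, hd2]
        have hxn : x 0 / a * (a * n 0) + x 1 / b * (b * n 1) + x 2 / c * (c * n 2) = ⟪x, n⟫ := by
          rw [inner3]; field_simp
        rw [hxn, ← sub_nonneg]
        have h2' : t * s ≤ ⟪x, n⟫ := h2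
        have : s⁻¹ * ⟪x, n⟫ - t = s⁻¹ * (⟪x, n⟫ - t * s) := by field_simp
        rw [this]
        exact mul_nonneg (inv_nonneg.2 hs.le) (by linarith)
      · ext i
        rw [diagMap_apply]
        show d i * (x i / d i) = x i
        have hdi : d i ≠ 0 := by
          fin_cases i
          exacts [hd0 ▸ ha.ne', hd1 ▸ hb.ne', hd2 ▸ hc.ne']
        field_simp
    · rintro ⟨u, ⟨hu1, hu2⟩, rfl⟩
      rw [norm3_le_one] at hu1
      constructor
      · show (diagMap d u 0)^2/a^2 + (diagMap d u 1)^2/b^2 + (diagMap d u 2)^2/c^2 ≤ 1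
        rw [diagMap_apply, diagMap_apply, diagMap_apply, hd0, hd1, hd2]
        have : (a * u 0)^2/a^2 + (b * u 1)^2/b^2 + (c * u 2)^2/c^2
            = u 0 ^2 + u 1^2 + u 2^2 := by field_simp
        rw [this]; exact hu1
      · show t * s ≤ ⟪diagMap d u, n⟫
        have hdm : ⟪diagMap d u, n⟫ = ⟪u, m⟫ := by
          rw [inner3, inner3, diagMap_apply, diagMap_apply, diagMap_apply,
            hm 0, hm 1, hm 2]
          ring
        rw [hdm]
        rw [hinner_e] at hu2
        calc t * s ≤ (s⁻¹ * ⟪u, m⟫) * s := by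
              exact mul_le_mul_of_nonneg_right hu2 hs.le
          _ = ⟪u, m⟫ := by field_simp
  rw [hset, Measure.addHaar_image_linearMap, diagMap_det, hd0, hd1, hd2,
    cap_unit e he t ht1 ht2, abs_of_pos (by positivity : (0:ℝ) < a*b*c),
    ← ENNReal.ofReal_mul (by positivity)]
  congr 1
  ring

lemma smul3 (r : ℝ) (x : E3) (i : Fin 3) : (r • x) i = r * x i := rfl

lemma support_bound (a b c : ℝ) (ha : 0 < a) (hb : 0 < b) (hc : 0 < c) (n x : E3)
    (hx : x 0^2/a^2 + x 1^2/b^2 + x 2^2/c^2 ≤ 1) :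
    ⟪x, n⟫ ≤ Real.sqrt (a^2*(n 0)^2 + b^2*(n 1)^2 + c^2*(n 2)^2) := by
  set d : Fin 3 → ℝ := ![a, b, c] with hddef
  set u : E3 := WithLp.toLp 2 (fun i => x i / d i : Fin 3 → ℝ) with hudef
  set m : E3 := WithLp.toLp 2 (fun i => d i * n i : Fin 3 → ℝ) with hmdef
  have hu : ∀ i, u i = x i / d i := fun i => rfl
  have hm : ∀ i, m i = d i * n i := fun i => rfl
  have hd0 : d 0 = a := rfl
  have hd1 : d 1 = b := rfl
  have hd2 : d 2 = c := rfl
  have h1 : ⟪x, n⟫ = ⟪u, m⟫ := by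
    rw [inner3, inner3, hu 0, hu 1, hu 2, hm 0, hm 1, hm 2, hd0, hd1, hd2]
    field_simp
  have h2 : ‖u‖ ≤ 1 := by
    rw [norm3_le_one, hu 0, hu 1, hu 2, hd0, hd1, hd2, div_pow, div_pow, div_pow]
    exact hx
  have h3 : ‖m‖ = Real.sqrt (a^2*(n 0)^2 + b^2*(n 1)^2 + c^2*(n 2)^2) := by
    rw [norm3]; congr 1
    rw [hm 0, hm 1, hm 2, hd0, hd1, hd2]; ring
  calc ⟪x, n⟫ = ⟪u, m⟫ := h1
    _ ≤ ‖u‖ * ‖m‖ := real_inner_le_norm u m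
    _ ≤ 1 * ‖m‖ := mul_le_mul_of_nonneg_right h2 (norm_nonneg m)
    _ = Real.sqrt (a^2*(n 0)^2 + b^2*(n 1)^2 + c^2*(n 2)^2) := by rw [one_mul, h3]

lemma exists_support_point (a b c : ℝ) (ha : 0 < a) (hb : 0 < b) (hc : 0 < c)
    (n : E3) (hn : ‖n‖ = 1) :
    ∃ p : E3, (p 0^2/a^2 + p 1^2/b^2 + p 2^2/c^2 ≤ 1) ∧
      ⟪p, n⟫ = Real.sqrt (a^2*(n 0)^2 + b^2*(n 1)^2 + c^2*(n 2)^2) := by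
  have hq : 0 < a^2*(n 0)^2 + b^2*(n 1)^2 + c^2*(n 2)^2 := s_sq_pos a b c ha hb hc n hn
  set q : ℝ := a^2*(n 0)^2 + b^2*(n 1)^2 + c^2*(n 2)^2 with hqdef
  set s : ℝ := Real.sqrt q with hsdef
  have hs : 0 < s := Real.sqrt_pos.2 hq
  have hs2 : s^2 = q := Real.sq_sqrt hq.le
  set d : Fin 3 → ℝ := ![a, b, c] with hddef
  refine ⟨WithLp.toLp 2 (fun i => s⁻¹ * ((d i)^2 * n i) : Fin 3 → ℝ), ?_, ?_⟩
  · have e0 : (WithLp.toLp 2 (fun i => s⁻¹ * ((d i)^2 * n i) : Fin 3 → ℝ) : E3) 0 = s⁻¹ * (a^2 * n 0) := rfl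
    have e1 : (WithLp.toLp 2 (fun i => s⁻¹ * ((d i)^2 * n i) : Fin 3 → ℝ) : E3) 1 = s⁻¹ * (b^2 * n 1) := rfl
    have e2 : (WithLp.toLp 2 (fun i => s⁻¹ * ((d i)^2 * n i) : Fin 3 → ℝ) : E3) 2 = s⁻¹ * (c^2 * n 2) := rfl
    rw [e0, e1, e2]
    have : (s⁻¹ * (a^2 * n 0))^2/a^2 + (s⁻¹ * (b^2 * n 1))^2/b^2 + (s⁻¹ * (c^2 * n 2))^2/c^2
        = s⁻¹^2 * q := by
      rw [hqdef]; field_simp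
    rw [this, ← hs2]
    field_simp; exact le_rfl
  · rw [inner3]
    have hd0 : d 0 = a := rfl
    have hd1 : d 1 = b := rfl
    have hd2 : d 2 = c := rfl
    show s⁻¹ * (d 0^2 * n 0) * n 0 + s⁻¹ * (d 1^2 * n 1) * n 1 + s⁻¹ * (d 2^2 * n 2) * n 2 = s
    rw [hd0, hd1, hd2]
    have heq : s⁻¹ * (a^2 * n 0) * n 0 + s⁻¹ * (b^2 * n 1) * n 1 + s⁻¹ * (c^2 * n 2) * n 2
        = s⁻¹ * q := by rw [hqdef]; ring
    rw [heq, ← hs2, pow_two]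
    field_simp

lemma mem_smul_ellipsoid (a b c r : ℝ) (ha : 0 < a) (hb : 0 < b) (hc : 0 < c) (hr : 0 < r)
    (y : E3) :
    y ∈ r • {x : E3 | x 0^2/a^2 + x 1^2/b^2 + x 2^2/c^2 ≤ 1} ↔
      y 0^2/a^2 + y 1^2/b^2 + y 2^2/c^2 ≤ r^2 := by
  rw [Set.mem_smul_set]
  constructor
  · rintro ⟨x, hx, rfl⟩
    rw [smul3, smul3, smul3]
    have heq : (r * x 0)^2/a^2 + (r * x 1)^2/b^2 + (r * x 2)^2/c^2
        = r^2 * (x 0^2/a^2 + x 1^2/b^2 + x 2^2/c^2) := by ring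
    rw [heq]
    nlinarith [mem_setOf_eq ▸ hx, sq_nonneg r]
  · intro h
    refine ⟨r⁻¹ • y, ?_, smul_inv_smul₀ hr.ne' y⟩
    show ((r⁻¹ • y) 0)^2/a^2 + ((r⁻¹ • y) 1)^2/b^2 + ((r⁻¹ • y) 2)^2/c^2 ≤ 1
    rw [smul3, smul3, smul3]
    have heq : (r⁻¹ * y 0)^2/a^2 + (r⁻¹ * y 1)^2/b^2 + (r⁻¹ * y 2)^2/c^2
        = (y 0^2/a^2 + y 1^2/b^2 + y 2^2/c^2) / r^2 := by
      field_simp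
    rw [heq, div_le_one (by positivity)]
    exact h

lemma gstrict (t₀ r : ℝ) (h1 : -1 ≤ t₀) (h2 : t₀ < r) (h0 : 0 < r) (h3 : r < 1) :
    (1-r)^2*(2+r) < (1-t₀)^2*(2+t₀) := by
  have hrt : r * t₀ < 1 := by
    rcases le_or_gt 0 t₀ with h | h
    · nlinarith
    · nlinarith
  have hr2 : r^2 < 1 := by nlinarith
  have ht2 : t₀^2 ≤ 1 := by nlinarith
  nlinarith [mul_pos (sub_pos.2 h2) (show 0 < 3 - r^2 - r*t₀ - t₀^2 by nlinarith)]

set_option maxHeartbeats 1000000 in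
/-- Let `K` be the solid ellipsoid with semi-axes `a, b, c > 0` and let
`0 < r < 1`. Every plane supporting the homothetic ellipsoid `r • K` cuts off from `K` a
segment of volume exactly `abc·(π/3)·(1-r)²·(2+r)`; consequently the floating body of `K`
to this parameter is `r • K` itself (the intersection of all closed half-spaces cutting
off volume at most `abc·(π/3)·(1-r)²·(2+r)`). -/
theorem ellipsoid_floating_bodies
    (a b c r : ℝ) (ha : 0 < a) (hb : 0 < b) (hc : 0 < c)
    (hr0 : 0 < r) (hr1 : r < 1)
    (K : Set E3)
    (hK : K = {x : E3 | (x 0) ^ 2 / a ^ 2 + (x 1) ^ 2 / b ^ 2 + (x 2) ^ 2 / c ^ 2 ≤ 1})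
    (δ : ℝ) (hδ : δ = a * b * c * (Real.pi / 3) * (1 - r) ^ 2 * (2 + r)) :
    -- every supporting plane of `r • K` cuts off a segment of volume exactly `δ` from `K`,
    (∀ (n : E3) (d : ℝ), ‖n‖ = 1 →
      (∃ y ∈ r • K, ⟪y, n⟫ = d) → (∀ y ∈ r • K, ⟪y, n⟫ ≤ d) →
      volume (K ∩ {x : E3 | d ≤ ⟪x, n⟫}) = ENNReal.ofReal δ) ∧
    -- consequently, the floating body of `K` to the parameter `δ` is `r • K`:
    r • K = ⋂₀ {H : Set E3 |
      (∃ (n : E3) (d : ℝ), ‖n‖ = 1 ∧ H = {x : E3 | ⟪x, n⟫ ≤ d}) ∧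
      volume (K \ H) ≤ ENNReal.ofReal δ} := by
  subst hK hδ
  set K : Set E3 := {x : E3 | (x 0) ^ 2 / a ^ 2 + (x 1) ^ 2 / b ^ 2 + (x 2) ^ 2 / c ^ 2 ≤ 1}
    with hK
  -- upper bound for points of `r • K`
  have hub : ∀ (n : E3), ∀ y ∈ r • K,
      ⟪y, n⟫ ≤ r * Real.sqrt (a^2*(n 0)^2 + b^2*(n 1)^2 + c^2*(n 2)^2) := by
    intro n y hy
    obtain ⟨x, hx, rfl⟩ := hy
    have : ⟪r • x, n⟫ = r * ⟪x, n⟫ := real_inner_smul_left x n r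
    rw [this]
    exact mul_le_mul_of_nonneg_left (support_bound a b c ha hb hc n x hx) hr0.le
  -- part 1
  have part1 : ∀ (n : E3) (d : ℝ), ‖n‖ = 1 →
      (∃ y ∈ r • K, ⟪y, n⟫ = d) → (∀ y ∈ r • K, ⟪y, n⟫ ≤ d) →
      volume (K ∩ {x : E3 | d ≤ ⟪x, n⟫})
        = ENNReal.ofReal (a * b * c * (Real.pi / 3) * (1 - r) ^ 2 * (2 + r)) := by
    intro n d hn hex hall
    set s : ℝ := Real.sqrt (a^2*(n 0)^2 + b^2*(n 1)^2 + c^2*(n 2)^2) with hsdef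
    have hle : d ≤ r * s := by
      obtain ⟨y, hy, hyd⟩ := hex
      rw [← hyd]
      exact hub n y hy
    have hge : r * s ≤ d := by
      obtain ⟨p, hpK, hps⟩ := exists_support_point a b c ha hb hc n hn
      have hmem : r • p ∈ r • K := ⟨p, hpK, rfl⟩
      have := hall (r • p) hmem
      rw [real_inner_smul_left, hps] at this
      exact this
    have hd : d = r * s := le_antisymm hle hge
    rw [hd]
    exact engine a b c ha hb hc n hn r (by linarith) hr1.le
  refine ⟨part1, ?_⟩
  apply Set.Subset.antisymm
  · -- r • K ⊆ intersection
    intro y hy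
    rintro H ⟨⟨n, d, hn, rfl⟩, hvol⟩
    simp only [mem_setOf_eq]
    by_contra hcon
    push_neg at hcon
    set s : ℝ := Real.sqrt (a^2*(n 0)^2 + b^2*(n 1)^2 + c^2*(n 2)^2) with hsdef
    have hq : 0 < a^2*(n 0)^2 + b^2*(n 1)^2 + c^2*(n 2)^2 := s_sq_pos a b c ha hb hc n hn
    have hs : 0 < s := Real.sqrt_pos.2 hq
    have hyrs : ⟪y, n⟫ ≤ r * s := hub n y hy
    set d' : ℝ := (d + ⟪y, n⟫) / 2 with hd'def
    have hdd' : d < d' := by simp only [hd'def]; linarith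
    have hd's : d' < r * s := by simp only [hd'def]; linarith
    set t' : ℝ := d' / s with ht'def
    set t₀ : ℝ := max t' (-1) with ht₀def
    have ht'r : t' < r := by
      rw [ht'def, div_lt_iff₀ hs]
      linarith
    have ht₀r : t₀ < r := max_lt ht'r (by linarith)
    have ht₀1 : -1 ≤ t₀ := le_max_right _ _
    have ht₀2 : t₀ ≤ 1 := by linarith
    have hts : d' ≤ t₀ * s := by
      have : t' * s = d' := div_mul_cancel₀ d' hs.ne'
      rw [← this]
      exact mul_le_mul_of_nonneg_right (le_max_left _ _) hs.le
    have hsub : K ∩ {x : E3 | t₀ * s ≤ ⟪x, n⟫} ⊆ K \ {x : E3 | ⟪x, n⟫ ≤ d} := by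
      rintro x ⟨hx1, hx2⟩
      refine ⟨hx1, ?_⟩
      simp only [mem_setOf_eq] at hx2 ⊢
      intro hle
      have : d' ≤ ⟪x, n⟫ := le_trans hts hx2
      linarith
    have hchain : ENNReal.ofReal (a*b*c*(Real.pi/3)*(1-t₀)^2*(2+t₀))
        ≤ ENNReal.ofReal (a*b*c*(Real.pi/3)*(1-r)^2*(2+r)) := by
      calc ENNReal.ofReal (a*b*c*(Real.pi/3)*(1-t₀)^2*(2+t₀))
          = volume (K ∩ {x : E3 | t₀ * s ≤ ⟪x, n⟫}) :=
            (engine a b c ha hb hc n hn t₀ ht₀1 ht₀2).symm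
        _ ≤ volume (K \ {x : E3 | ⟪x, n⟫ ≤ d}) := measure_mono hsub
        _ ≤ ENNReal.ofReal (a*b*c*(Real.pi/3)*(1-r)^2*(2+r)) := hvol
    have hreal : a*b*c*(Real.pi/3)*(1-t₀)^2*(2+t₀) ≤ a*b*c*(Real.pi/3)*(1-r)^2*(2+r) :=
      (ENNReal.ofReal_le_ofReal_iff (by positivity)).1 hchain
    have hk : 0 < a*b*c*(Real.pi/3) := by positivity
    nlinarith [mul_lt_mul_of_pos_left (gstrict t₀ r ht₀1 ht₀r hr0 hr1) hk]
  · -- intersection ⊆ r • K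
    intro y hy
    rw [mem_smul_ellipsoid a b c r ha hb hc hr0 y]
    by_contra hQ
    push_neg at hQ
    set Q : ℝ := y 0^2/a^2 + y 1^2/b^2 + y 2^2/c^2 with hQdef
    have hQ0 : 0 < Q := lt_trans (by positivity) hQ
    set m' : E3 := WithLp.toLp 2 (fun i => y i / (![a,b,c] i)^2 : Fin 3 → ℝ) with hm'def
    have hm'0 : m' 0 = y 0 / a^2 := rfl
    have hm'1 : m' 1 = y 1 / b^2 := rfl
    have hm'2 : m' 2 = y 2 / c^2 := rfl
    have hinnerym : ⟪y, m'⟫ = Q := by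
      rw [inner3, hm'0, hm'1, hm'2, hQdef]; field_simp
    have hm'ne : m' ≠ 0 := by
      intro h0
      rw [h0] at hinnerym
      simp [inner_zero_right] at hinnerym
      rw [← hinnerym] at hQ0
      exact lt_irrefl 0 hQ0
    have hnm' : 0 < ‖m'‖ := norm_pos_iff.2 hm'ne
    set n : E3 := ‖m'‖⁻¹ • m' with hndef
    have hn : ‖n‖ = 1 := norm_smul_inv_norm hm'ne
    have hn0 : n 0 = ‖m'‖⁻¹ * (y 0 / a^2) := by rw [hndef, smul3, hm'0]
    have hn1 : n 1 = ‖m'‖⁻¹ * (y 1 / b^2) := by rw [hndef, smul3, hm'1]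
    have hn2 : n 2 = ‖m'‖⁻¹ * (y 2 / c^2) := by rw [hndef, smul3, hm'2]
    have hqn : a^2*(n 0)^2 + b^2*(n 1)^2 + c^2*(n 2)^2 = (‖m'‖⁻¹)^2 * Q := by
      rw [hn0, hn1, hn2, hQdef]; field_simp
    have hsq : Real.sqrt (a^2*(n 0)^2 + b^2*(n 1)^2 + c^2*(n 2)^2) = ‖m'‖⁻¹ * Real.sqrt Q := by
      rw [hqn, Real.sqrt_mul (sq_nonneg _), Real.sqrt_sq (inv_nonneg.2 hnm'.le)]
    have hHmem : {x : E3 | ⟪x, n⟫ ≤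
        r * Real.sqrt (a^2*(n 0)^2 + b^2*(n 1)^2 + c^2*(n 2)^2)} ∈
        {H : Set E3 | (∃ (n : E3) (d : ℝ), ‖n‖ = 1 ∧ H = {x : E3 | ⟪x, n⟫ ≤ d}) ∧
          volume (K \ H) ≤ ENNReal.ofReal (a * b * c * (Real.pi / 3) * (1 - r) ^ 2 * (2 + r))} := by
      refine ⟨⟨n, _, hn, rfl⟩, ?_⟩
      have hsub : K \ {x : E3 | ⟪x, n⟫ ≤
          r * Real.sqrt (a^2*(n 0)^2 + b^2*(n 1)^2 + c^2*(n 2)^2)} ⊆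
          K ∩ {x : E3 | r * Real.sqrt (a^2*(n 0)^2 + b^2*(n 1)^2 + c^2*(n 2)^2) ≤ ⟪x, n⟫} := by
        rintro x ⟨hx1, hx2⟩
        simp only [mem_setOf_eq, not_le] at hx2
        exact ⟨hx1, le_of_lt hx2⟩
      refine le_trans (measure_mono hsub) (le_of_eq ?_)
      exact engine a b c ha hb hc n hn r (by linarith) hr1.le
    have hyH := hy _ hHmem
    simp only [mem_setOf_eq] at hyH
    have hyn : ⟪y, n⟫ = ‖m'‖⁻¹ * Q := by
      rw [hndef, real_inner_smul_right, hinnerym]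
    rw [hyn, hsq] at hyH
    have hsqrtQ : 0 < Real.sqrt Q := Real.sqrt_pos.2 hQ0
    have hQle : Q ≤ r * Real.sqrt Q := by
      have ht : ‖m'‖ * ‖m'‖⁻¹ = 1 := mul_inv_cancel₀ hnm'.ne'
      have h1 : ‖m'‖ * (‖m'‖⁻¹ * Q) = Q := by rw [← mul_assoc, ht, one_mul]
      have h2 : ‖m'‖ * (r * (‖m'‖⁻¹ * Real.sqrt Q)) = r * Real.sqrt Q := by
        rw [show ‖m'‖ * (r * (‖m'‖⁻¹ * Real.sqrt Q))
            = (‖m'‖ * ‖m'‖⁻¹) * (r * Real.sqrt Q) by ring, ht, one_mul]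
      have h3 := mul_le_mul_of_nonneg_left hyH hnm'.le
      calc Q = ‖m'‖ * (‖m'‖⁻¹ * Q) := h1.symm
        _ ≤ ‖m'‖ * (r * (‖m'‖⁻¹ * Real.sqrt Q)) := h3
        _ = r * Real.sqrt Q := h2
    have hsqQ : (Real.sqrt Q)^2 = Q := Real.sq_sqrt hQ0.le
    nlinarith [hQle, hsqrtQ, hsqQ, hQ, sq_nonneg (Real.sqrt Q - r)]
end
end
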